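/- arXiv:2106.08716 — 5 statements merged into one kernel-verified Lean document; each statement's English description precedes it below -/
import Mathlib

section
/- Given an incomparable pair (π_I, π_J) of positive paths and an effective edge e of the ladder diagram, e lies on π_I or on π_J if and only if e lies on π_{I∨J} or on π_{I∧J}. Consequently, for each effective edge e, the set of positive paths not containing e is a sublattice of the distributive lattice of all positive paths (closed under meet and join). -/
/-- Componentwise order on the strictly increasing sequences indexing positive paths. -/
def seqLE {l m : ℕ} (I : Fin l → ℕ) (J : Fin m → ℕ) : Prop :=
  m ≤ l ∧ ∀ (r : Fin m) (h : r.val < l), I ⟨r.val, h⟩ ≤ J r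

/-- The meet `I ∧ J`. -/
def meetSeq {l m : ℕ} (_hml : m ≤ l) (I : Fin l → ℕ) (J : Fin m → ℕ) : Fin l → ℕ :=
  fun r => if h : r.val < m then min (I r) (J ⟨r.val, h⟩) else I r

/-- The join `I ∨ J`. -/
def joinSeq {l m : ℕ} (hml : m ≤ l) (I : Fin l → ℕ) (J : Fin m → ℕ) : Fin m → ℕ :=
  fun r => max (I ⟨r.val, lt_of_lt_of_le r.isLt hml⟩) (J r)

/-- The edge from `(x, y)` to `(x+1, y)` (if `horiz = true`), resp. from `(x, y)` to
`(x, y+1)` (if `horiz = false`), lies on the positive path `π_I`; coordinates are taken with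
origin the lower-left vertex `O_0` of the ladder diagram, a path having `n` unit steps. -/
def onPath (n : ℕ) {l : ℕ} (I : Fin l → ℕ) (horiz : Bool) (x y : ℕ) : Prop :=
  if horiz then ∃ h : x < l, I ⟨x, h⟩ = x + y + 1
  else x + y < n ∧ {r : Fin l | I r ≤ x + y}.ncard = x ∧ ∀ r, I r ≠ x + y + 1

/-- The box of the ladder diagram `Λ(n_1,…,n_k;n)` with lower-left corner `(x, y)`
(coordinates based at `O_0`): the column `x` belongs to the `l`-th diagonal block
`[ν(l-1), ν l)` and the box lies strictly below the diagonal square `Q_l`. -/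
def BoxIn (k n : ℕ) (ν : ℕ → ℕ) (x y : ℕ) : Prop :=
  ∃ l, 1 ≤ l ∧ l ≤ k + 1 ∧ ν (l - 1) ≤ x ∧ x < ν l ∧ y + ν l < n

/-- An edge is effective if it lies in the interior of the ladder diagram `Λ` (both adjacent
boxes belong to `Λ`), or it lies on the roof of `Λ` meeting some vertex
`L_l = (ν(l-1), n - ν l)`. -/
def EffectiveEdge (k n : ℕ) (ν : ℕ → ℕ) (horiz : Bool) (x y : ℕ) : Prop :=
  if horiz then
    (1 ≤ y ∧ BoxIn k n ν x (y - 1) ∧ BoxIn k n ν x y) ∨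
      (∃ l, 1 ≤ l ∧ l ≤ k + 1 ∧ x = ν (l - 1) ∧ y + ν l = n)
  else
    (1 ≤ x ∧ BoxIn k n ν (x - 1) y ∧ BoxIn k n ν x y) ∨
      (∃ l, 1 ≤ l ∧ l ≤ k + 1 ∧ x = ν (l - 1) ∧ y + ν l = n)

namespace EffAux

open Finset

def cnt {l : ℕ} (I : Fin l → ℕ) (t : ℕ) : ℕ :=
  (Finset.univ.filter (fun r => I r ≤ t)).card

lemma ncard_eq_cnt {l : ℕ} (I : Fin l → ℕ) (t : ℕ) :
    {r : Fin l | I r ≤ t}.ncard = cnt I t := by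
  classical
  rw [Set.ncard_eq_toFinset_card']
  congr 1
  ext r
  simp [cnt]

lemma card_filter_lt {l : ℕ} (c : ℕ) (hc : c ≤ l) :
    (Finset.univ.filter (fun r : Fin l => r.val < c)).card = c := by
  have h : Finset.univ.filter (fun r : Fin l => r.val < c) =
      Finset.map (Fin.castLEEmb hc) Finset.univ := by
    ext r
    simp only [Finset.mem_filter, Finset.mem_univ, true_and, Finset.mem_map]
    constructor
    · intro h; exact ⟨⟨r.val, h⟩, rfl⟩
    · rintro ⟨s, rfl⟩; exact s.isLt
  rw [h, Finset.card_map, Finset.card_univ, Fintype.card_fin]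

lemma seg {l : ℕ} {I : Fin l → ℕ} (hI : StrictMono I) (t : ℕ) (r : Fin l) :
    I r ≤ t ↔ r.val < cnt I t := by
  constructor
  · intro h
    have hsub : (Finset.univ.filter fun r' : Fin l => r'.val < r.val + 1) ⊆
        Finset.univ.filter fun r' => I r' ≤ t := by
      intro r' hr'
      simp only [Finset.mem_filter, Finset.mem_univ, true_and, Nat.lt_succ_iff] at hr' ⊢
      exact le_trans (hI.monotone (show r' ≤ r from hr')) h
    have hcard := Finset.card_le_card hsub
    rw [card_filter_lt (r.val + 1) r.isLt] at hcard
    exact hcard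
  · intro h
    by_contra hc
    push_neg at hc
    have hsub : (Finset.univ.filter fun r' : Fin l => I r' ≤ t) ⊆
        Finset.univ.filter fun r' : Fin l => r'.val < r.val := by
      intro r' hr'
      simp only [Finset.mem_filter, Finset.mem_univ, true_and] at hr' ⊢
      exact hI.lt_iff_lt.mp (lt_of_le_of_lt hr' hc)
    have hcard := Finset.card_le_card hsub
    rw [card_filter_lt r.val r.isLt.le] at hcard
    exact absurd h (not_lt.mpr hcard)

lemma cnt_le {l : ℕ} (I : Fin l → ℕ) (t : ℕ) : cnt I t ≤ l := by
  refine le_trans (Finset.card_filter_le _ _) ?_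
  simp

lemma cnt_mono {l : ℕ} (I : Fin l → ℕ) (t : ℕ) : cnt I t ≤ cnt I (t + 1) := by
  apply Finset.card_le_card
  intro r hr
  simp only [Finset.mem_filter, Finset.mem_univ, true_and] at hr ⊢
  omega

lemma cnt_succ_le {l : ℕ} {I : Fin l → ℕ} (hinj : Function.Injective I) (t : ℕ) :
    cnt I (t + 1) ≤ cnt I t + 1 := by
  classical
  unfold cnt
  have hsub : (Finset.univ.filter fun r : Fin l => I r ≤ t + 1) ⊆
      (Finset.univ.filter fun r : Fin l => I r ≤ t) ∪
        (Finset.univ.filter fun r : Fin l => I r = t + 1) := by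
    intro r hr
    simp only [Finset.mem_filter, Finset.mem_univ, true_and, Finset.mem_union] at hr ⊢
    omega
  refine le_trans (Finset.card_le_card hsub) (le_trans (Finset.card_union_le _ _) ?_)
  have h1 : (Finset.univ.filter fun r : Fin l => I r = t + 1).card ≤ 1 := by
    apply Finset.card_le_one.mpr
    intro a ha b hb
    simp only [Finset.mem_filter] at ha hb
    exact hinj (ha.2.trans hb.2.symm)
  omega

lemma no_new_iff {l : ℕ} (I : Fin l → ℕ) (t : ℕ) :
    (∀ r, I r ≠ t + 1) ↔ cnt I (t + 1) = cnt I t := by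
  constructor
  · intro h
    unfold cnt
    congr 1
    ext r
    simp only [Finset.mem_filter, Finset.mem_univ, true_and]
    have := h r; omega
  · intro h r hr
    have hsub : (Finset.univ.filter fun r' : Fin l => I r' ≤ t) ⊂
        Finset.univ.filter fun r' : Fin l => I r' ≤ t + 1 := by
      refine Finset.ssubset_iff_of_subset ?_ |>.mpr ⟨r, ?_, ?_⟩
      · intro r' hr'
        simp only [Finset.mem_filter, Finset.mem_univ, true_and] at hr' ⊢; omega
      · simp only [Finset.mem_filter, Finset.mem_univ, true_and]; omega
      · simp only [Finset.mem_filter, Finset.mem_univ, true_and]; omega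
    have := Finset.card_lt_card hsub
    unfold cnt at h
    omega

lemma cnt_meet {l m : ℕ} (hml : m ≤ l) {I : Fin l → ℕ} {J : Fin m → ℕ}
    (hI : StrictMono I) (hJ : StrictMono J) (t : ℕ) :
    cnt (meetSeq hml I J) t = max (cnt I t) (cnt J t) := by
  have hbm : cnt J t ≤ m := cnt_le J t
  have hal : cnt I t ≤ l := cnt_le I t
  have key : ∀ r : Fin l, meetSeq hml I J r ≤ t ↔ r.val < max (cnt I t) (cnt J t) := by
    intro r
    unfold meetSeq
    by_cases h : r.val < m
    · rw [dif_pos h, min_le_iff, seg hI, seg hJ, lt_max_iff]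
    · rw [dif_neg h, seg hI, lt_max_iff]
      constructor
      · exact Or.inl
      · rintro (h1 | h2)
        · exact h1
        · exact absurd (lt_of_lt_of_le h2 hbm) h
  calc cnt (meetSeq hml I J) t
      = (Finset.univ.filter fun r : Fin l => r.val < max (cnt I t) (cnt J t)).card := by
        unfold cnt; congr 1; ext r
        simp only [Finset.mem_filter, Finset.mem_univ, true_and]
        exact key r
    _ = max (cnt I t) (cnt J t) := card_filter_lt _ (max_le hal (hbm.trans hml))

lemma cnt_join {l m : ℕ} (hml : m ≤ l) {I : Fin l → ℕ} {J : Fin m → ℕ}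
    (hI : StrictMono I) (hJ : StrictMono J) (t : ℕ) :
    cnt (joinSeq hml I J) t = min (cnt I t) (cnt J t) := by
  have hbm : cnt J t ≤ m := cnt_le J t
  have key : ∀ r : Fin m, joinSeq hml I J r ≤ t ↔ r.val < min (cnt I t) (cnt J t) := by
    intro r
    unfold joinSeq
    rw [max_le_iff, seg hI, seg hJ, lt_min_iff]
  calc cnt (joinSeq hml I J) t
      = (Finset.univ.filter fun r : Fin m => r.val < min (cnt I t) (cnt J t)).card := by
        unfold cnt; congr 1; ext r
        simp only [Finset.mem_filter, Finset.mem_univ, true_and]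
        exact key r
    _ = min (cnt I t) (cnt J t) := card_filter_lt _ (le_trans (min_le_right _ _) hbm)

lemma onV_iff (n : ℕ) {l : ℕ} (I : Fin l → ℕ) (x y : ℕ) :
    onPath n I false x y ↔
      x + y < n ∧ cnt I (x + y) = x ∧ cnt I (x + y + 1) = cnt I (x + y) := by
  simp only [onPath, Bool.false_eq_true, if_false, ncard_eq_cnt, no_new_iff]

lemma vert_iff (n : ℕ) {l m : ℕ} (hml : m ≤ l) (I : Fin l → ℕ) (J : Fin m → ℕ)
    (hI : StrictMono I) (hJ : StrictMono J) (x y : ℕ) :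
    (onPath n I false x y ∨ onPath n J false x y) ↔
      (onPath n (joinSeq hml I J) false x y ∨ onPath n (meetSeq hml I J) false x y) := by
  rw [onV_iff, onV_iff, onV_iff, onV_iff,
    cnt_join hml hI hJ, cnt_join hml hI hJ, cnt_meet hml hI hJ, cnt_meet hml hI hJ]
  have ha := cnt_mono I (x + y)
  have hb := cnt_mono J (x + y)
  have ha' := cnt_succ_le hI.injective (x + y)
  have hb' := cnt_succ_le hJ.injective (x + y)
  omega

lemma horiz_iff (n : ℕ) {l m : ℕ} (hml : m ≤ l) (I : Fin l → ℕ) (J : Fin m → ℕ) (x y : ℕ) :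
    (onPath n I true x y ∨ onPath n J true x y) ↔
      (onPath n (joinSeq hml I J) true x y ∨ onPath n (meetSeq hml I J) true x y) := by
  simp only [onPath, if_true]
  by_cases hm : x < m
  · have hlx : x < l := lt_of_lt_of_le hm hml
    have hmeet : meetSeq hml I J ⟨x, hlx⟩ = min (I ⟨x, hlx⟩) (J ⟨x, hm⟩) := by
      simp [meetSeq, hm]
    have hjoin : joinSeq hml I J ⟨x, hm⟩ = max (I ⟨x, hlx⟩) (J ⟨x, hm⟩) := rfl
    constructor
    · rintro (⟨h, hh⟩ | ⟨h, hh⟩)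
      · have hh' : I ⟨x, hlx⟩ = x + y + 1 := hh
        rcases le_total (I ⟨x, hlx⟩) (J ⟨x, hm⟩) with hle | hle
        · exact Or.inr ⟨hlx, by rw [hmeet]; omega⟩
        · exact Or.inl ⟨hm, by rw [hjoin]; omega⟩
      · have hh' : J ⟨x, hm⟩ = x + y + 1 := hh
        rcases le_total (I ⟨x, hlx⟩) (J ⟨x, hm⟩) with hle | hle
        · exact Or.inl ⟨hm, by rw [hjoin]; omega⟩
        · exact Or.inr ⟨hlx, by rw [hmeet]; omega⟩
    · rintro (⟨h, hh⟩ | ⟨h, hh⟩)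
      · have hh' : max (I ⟨x, hlx⟩) (J ⟨x, hm⟩) = x + y + 1 := by
          rw [← hjoin]; exact hh
        have hor : I ⟨x, hlx⟩ = x + y + 1 ∨ J ⟨x, hm⟩ = x + y + 1 := by omega
        exact hor.imp (fun ha => ⟨hlx, ha⟩) (fun hb => ⟨hm, hb⟩)
      · have hh' : min (I ⟨x, hlx⟩) (J ⟨x, hm⟩) = x + y + 1 := by
          rw [← hmeet]; exact hh
        have hor : I ⟨x, hlx⟩ = x + y + 1 ∨ J ⟨x, hm⟩ = x + y + 1 := by omega
        exact hor.imp (fun ha => ⟨hlx, ha⟩) (fun hb => ⟨hm, hb⟩)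
  · constructor
    · rintro (⟨h, hh⟩ | ⟨h, hh⟩)
      · exact Or.inr ⟨h, by simpa [meetSeq, hm] using hh⟩
      · exact absurd h hm
    · rintro (⟨h, hh⟩ | ⟨h, hh⟩)
      · exact absurd h hm
      · exact Or.inl ⟨h, by simpa [meetSeq, hm] using hh⟩

end EffAux


/-- For an incomparable pair `(π_I, π_J)` of positive paths and an effective edge `e` of the
ladder diagram, `e` lies on `π_I` or on `π_J` if and only if `e` lies on `π_{I∨J}` or on
`π_{I∧J}`.  Consequently, for each effective edge `e`, the set of positive paths not containing
`e` is closed under meet and join. -/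
theorem effective_edge_on_meet_join (k n : ℕ) (ν : ℕ → ℕ) (hν0 : ν 0 = 0)
    (hνtop : ν (k + 1) = n) (hmono : ∀ i ≤ k, ν i < ν (i + 1))
    {l m : ℕ} (hml : m ≤ l) (I : Fin l → ℕ) (J : Fin m → ℕ)
    (hI : StrictMono I) (hJ : StrictMono J)
    (hIb : ∀ r, 1 ≤ I r ∧ I r ≤ n) (hJb : ∀ r, 1 ≤ J r ∧ J r ≤ n)
    (hpathI : ∃ j, 1 ≤ j ∧ j ≤ k ∧ l = ν j) (hpathJ : ∃ j, 1 ≤ j ∧ j ≤ k ∧ m = ν j)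
    (hinc : ¬ seqLE I J ∧ ¬ seqLE J I)
    (horiz : Bool) (x y : ℕ) (he : EffectiveEdge k n ν horiz x y) :
    ((onPath n I horiz x y ∨ onPath n J horiz x y) ↔
      (onPath n (joinSeq hml I J) horiz x y ∨ onPath n (meetSeq hml I J) horiz x y)) ∧
    (∀ {l' m' : ℕ} (hml' : m' ≤ l') (I' : Fin l' → ℕ) (J' : Fin m' → ℕ),
      StrictMono I' → StrictMono J' →
      (∀ r, 1 ≤ I' r ∧ I' r ≤ n) → (∀ r, 1 ≤ J' r ∧ J' r ≤ n) →
      ¬ onPath n I' horiz x y → ¬ onPath n J' horiz x y →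
      ¬ onPath n (meetSeq hml' I' J') horiz x y ∧
        ¬ onPath n (joinSeq hml' I' J') horiz x y) := by
  constructor
  · cases horiz with
    | true => exact EffAux.horiz_iff n hml I J x y
    | false => exact EffAux.vert_iff n hml I J hI hJ x y
  · intro l' m' hml' I' J' hI' hJ' _ _ hnI hnJ
    have key : (onPath n I' horiz x y ∨ onPath n J' horiz x y) ↔
        (onPath n (joinSeq hml' I' J') horiz x y ∨
          onPath n (meetSeq hml' I' J') horiz x y) := by
      cases horiz with
      | true => exact EffAux.horiz_iff n hml' I' J' x y
      | false => exact EffAux.vert_iff n hml' I' J' hI' hJ' x y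
    constructor
    · intro hmeet
      rcases key.mpr (Or.inr hmeet) with h | h
      exacts [hnI h, hnJ h]
    · intro hjoin
      rcases key.mpr (Or.inl hjoin) with h | h
      exacts [hnI h, hnJ h]
end

section
/- For any u, v, w in the symmetric group S_n with ℓ(w) = ℓ(u) + ℓ(v), and any simple reflection s_i such that ℓ(u s_i) > ℓ(u), ℓ(v s_i) > ℓ(v), and ℓ(w s_i) > ℓ(w), the Schubert structure constants of the complete flag variety Fℓ_n satisfy N_{u,v}^w = N_{u s_i, v}^{w s_i}; if instead ℓ(u s_i) > ℓ(u), ℓ(v s_i) > ℓ(v), and ℓ(w s_i) < ℓ(w), then N_{u,v}^w = 0. -/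
/-- The symmetric group `S_n`, realized as permutations of `Fin n`. -/
abbrev Sn (n : ℕ) := Equiv.Perm (Fin n)

/-- The Coxeter length of a permutation: its number of inversions. -/
noncomputable def len {n : ℕ} (u : Sn n) : ℕ :=
  Set.ncard {p : Fin n × Fin n | p.1 < p.2 ∧ u p.2 < u p.1}

/-- The simple transposition `s_{r+1} = (r+1, r+2)` (0-indexed: swapping `r` and `r+1`). -/
def simpleRefl (n r : ℕ) (h : r + 1 < n) : Sn n :=
  Equiv.swap ⟨r, by omega⟩ ⟨r + 1, h⟩

open Classical in
/-- `N` is the family of Schubert structure constants of `H^*(Fℓ_n, ℤ)`: there is a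
commutative ring with a linearly independent family `(σ^u)_{u ∈ S_n}` of Schubert classes,
with `σ^{id} = 1`, products `σ^u ∪ σ^v = Σ_w N_{u,v}^w σ^w` graded by length, satisfying
Monk's rule for multiplication by the divisor classes `σ^{s_r}` (which characterizes the
cohomology ring of the complete flag variety together with its Schubert basis). -/
def IsSchubertConstants (n : ℕ) (N : Sn n → Sn n → Sn n → ℤ) : Prop :=
  ∃ (A : Type) (_ : CommRing A) (σ : Sn n → A),
    LinearIndependent ℤ σ ∧ σ 1 = 1 ∧
    (∀ u v : Sn n, σ u * σ v = ∑ w : Sn n, N u v w • σ w) ∧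
    (∀ u v w : Sn n, N u v w ≠ 0 → len w = len u + len v) ∧
    (∀ (r : ℕ) (h : r + 1 < n) (u : Sn n),
      σ (simpleRefl n r h) * σ u =
        ∑ w : Sn n, (if ∃ a b : Fin n, a.val ≤ r ∧ r < b.val ∧
            w = u * Equiv.swap a b ∧ len w = len u + 1 then (1 : ℤ) else 0) • σ w)

/-!
Let `N_u` be the matrix of multiplication by `σ^u` on `ℤ^{S_n}` in the Schubert basis. These
matrices commute, and Monk's rule makes `M_j := N_{s_j}` an explicit 0/1 matrix. The divided
difference `∂_r` satisfies `∂_r M_j = M_j ∂_r` for `j ≠ r` and `∂_r M_r = 1 + s_r(M_r) ∂_r`,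
which is checked entrywise using the criterion for `ℓ(u (a b)) = ℓ(u) + 1`. Every basis vector
is reached from `σ^{id}` by the `M_j` (transition at the lexicographically largest inversion), so
an operator that intertwines the `M_j` in this twisted way and kills `σ^{id}` vanishes. This
gives the Leibniz rule `∂_r N_x = N_{∂_r x} + N_{s_r(σ^x)} ∂_r`; its `(w, v)` entries for
`x = u s_r` and `x = u`, where the last term vanishes since `v` ascends at `r`, are the two
claims.
-/

open Finset Equiv Matrix

namespace Schubert

variable {n : ℕ}

def inversions (u : Sn n) : Finset (Fin n × Fin n) :=
  {p | p.1 < p.2 ∧ u p.2 < u p.1}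

@[simp] lemma mem_inversions {u : Sn n} {p : Fin n × Fin n} :
    p ∈ inversions u ↔ p.1 < p.2 ∧ u p.2 < u p.1 := by
  simp [inversions]

lemma len_eq_card_inversions (u : Sn n) : len u = #(inversions u) := by
  rw [len, ← Set.ncard_coe_finset]
  congr
  ext
  simp

lemma len_mul_add_two_mul_card_inter {t : Sn n} (ht : t * t = 1) (u : Sn n) :
    len (u * t) + 2 * #(inversions u ∩ inversions t) = len u + len t := by
  have htt (x : Fin n) : t (t x) = x := by simpa using congr($ht x)
  have hne {x y : Fin n} (h : x ≠ y) : t x ≠ t y := t.injective.ne h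
  have kept : #(inversions (u * t) \ inversions t) = #(inversions u \ inversions t) := by
    refine card_bij' (fun p _ => (t p.1, t p.2)) (fun p _ => (t p.1, t p.2)) ?_ ?_
      (by simp [htt]) (by simp [htt])
    all_goals
      rintro ⟨i, j⟩ hp
      simp only [mem_sdiff, mem_inversions, Perm.mul_apply, htt, not_and, not_lt] at hp ⊢
      exact ⟨⟨lt_of_le_of_ne (hp.2 hp.1.1) (hne hp.1.1.ne), hp.1.2⟩, fun _ => hp.1.1.le⟩
  have flipped : #(inversions (u * t) ∩ inversions t) = #(inversions t \ inversions u) := by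
    refine card_bij' (fun p _ => (t p.2, t p.1)) (fun p _ => (t p.2, t p.1)) ?_ ?_
      (by simp [htt]) (by simp [htt])
    all_goals
      rintro ⟨i, j⟩ hp
      simp only [mem_sdiff, mem_inter, mem_inversions, Perm.mul_apply, htt, not_and,
        not_lt] at hp ⊢
    · exact ⟨⟨hp.2.2, hp.2.1⟩, fun _ => hp.1.2.le⟩
    · exact ⟨⟨hp.1.2, lt_of_le_of_ne (hp.2 hp.1.1) (u.injective.ne hp.1.1.ne)⟩, hp.1.2, hp.1.1⟩
  have h1 := card_sdiff_add_card_inter (inversions (u * t)) (inversions t)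
  have h2 := card_sdiff_add_card_inter (inversions u) (inversions t)
  have h3 := card_sdiff_add_card_inter (inversions t) (inversions u)
  rw [inter_comm] at h3
  rw [len_eq_card_inversions, len_eq_card_inversions, len_eq_card_inversions]
  omega

lemma inversions_swap {a b : Fin n} (hab : a < b) :
    inversions (swap a b) =
      insert (a, b) ((Ioo a b).image (a, ·) ∪ (Ioo a b).image (·, b)) := by
  ext ⟨i, j⟩
  simp only [mem_inversions, swap_apply_def]
  simp only [mem_insert, Prod.mk.injEq, mem_union, mem_image, mem_Ioo, eq_comm (a := a),
    exists_eq_right_right, eq_comm (a := b), ↓existsAndEq, true_and]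
  split_ifs <;> simp only [Fin.lt_def, Fin.ext_iff] at * <;> omega

lemma sum_inversions_swap {a b : Fin n} (hab : a < b) (f : Fin n × Fin n → ℕ) :
    ∑ p ∈ inversions (swap a b), f p = f (a, b) + ∑ c ∈ Ioo a b, (f (a, c) + f (c, b)) := by
  rw [inversions_swap hab, sum_insert, sum_union, sum_image, sum_image, sum_add_distrib]
  · simp [Set.InjOn]
  · simp [Set.InjOn]
  · simp only [disjoint_left, mem_image, mem_Ioo]
    rintro _ ⟨c, hc, rfl⟩ ⟨d, hd, hdc⟩
    simp only [Prod.mk.injEq] at hdc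
    exact hc.2.ne hdc.2.symm
  · simp only [mem_union, mem_image, mem_Ioo, Prod.mk.injEq, not_or, not_exists, not_and]
    exact ⟨fun c hc _ hcb => hc.2.ne hcb, fun c hc hca _ => hc.1.ne' hca⟩

lemma len_mul_swap_of_lt {u : Sn n} {a b : Fin n} (hab : a < b) (h : u a < u b) :
    len (u * swap a b) = len u + 1 + 2 * #{c ∈ Ioo a b | u a < u c ∧ u c < u b} := by
  have key := len_mul_add_two_mul_card_inter (swap_mul_self a b) u
  rw [inter_comm, ← filter_mem_eq_inter, card_filter, sum_inversions_swap hab,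
    len_eq_card_inversions (swap a b), card_eq_sum_ones, sum_inversions_swap hab] at key
  rw [card_filter]
  have split : ∑ c ∈ Ioo a b, ((1 : ℕ) + 1) =
      2 * ∑ c ∈ Ioo a b, ((if (a, c) ∈ inversions u then 1 else 0) +
        (if (c, b) ∈ inversions u then 1 else 0)) +
      2 * ∑ c ∈ Ioo a b, (if u a < u c ∧ u c < u b then 1 else 0) := by
    rw [mul_sum, mul_sum, ← sum_add_distrib]
    refine sum_congr rfl fun c hc => ?_
    rw [mem_Ioo] at hc
    have hca : u c ≠ u a := u.injective.ne hc.1.ne'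
    have hcb : u c ≠ u b := u.injective.ne hc.2.ne
    simp only [mem_inversions, hc, true_and]
    split_ifs <;> simp only [Fin.lt_def, Fin.ext_iff, ne_eq] at * <;> omega
  simp only [mem_inversions, hab, true_and, not_lt_of_gt h, if_false] at key split
  omega

lemma len_mul_swap_eq_add_one_iff {u : Sn n} {a b : Fin n} (hab : a < b) :
    len (u * swap a b) = len u + 1 ↔ u a < u b ∧ ∀ c ∈ Ioo a b, ¬(u a < u c ∧ u c < u b) := by
  rcases lt_or_gt_of_ne (u.injective.ne hab.ne) with h | h
  · rw [len_mul_swap_of_lt hab h]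
    simp [h, filter_eq_empty_iff]
  · have hback := len_mul_swap_of_lt (u := u * swap a b) hab (by simpa using h)
    rw [mul_swap_mul_self] at hback
    simp only [not_lt_of_gt h, false_and, iff_false]
    omega

variable {r : ℕ}

def rPos (hr : r + 1 < n) : Fin n := ⟨r, by omega⟩

def rSuccPos (hr : r + 1 < n) : Fin n := ⟨r + 1, hr⟩

@[simp] lemma val_rPos (hr : r + 1 < n) : (rPos hr).val = r := rfl

@[simp] lemma val_rSuccPos (hr : r + 1 < n) : (rSuccPos hr).val = r + 1 := rfl

lemma simpleRefl_eq_swap (hr : r + 1 < n) : simpleRefl n r hr = swap (rPos hr) (rSuccPos hr) :=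
  rfl

lemma rPos_lt_rSuccPos (hr : r + 1 < n) : rPos hr < rSuccPos hr := Fin.lt_def.2 (by simp)

@[simp] lemma mul_simpleRefl_mul_simpleRefl (hr : r + 1 < n) (u : Sn n) :
    u * simpleRefl n r hr * simpleRefl n r hr = u :=
  mul_swap_mul_self _ _ _

@[simp] lemma mul_simpleRefl_apply_rPos (hr : r + 1 < n) (u : Sn n) :
    (u * simpleRefl n r hr) (rPos hr) = u (rSuccPos hr) := by
  simp [simpleRefl_eq_swap]

@[simp] lemma mul_simpleRefl_apply_rSuccPos (hr : r + 1 < n) (u : Sn n) :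
    (u * simpleRefl n r hr) (rSuccPos hr) = u (rPos hr) := by
  simp [simpleRefl_eq_swap]

lemma val_simpleRefl_apply (hr : r + 1 < n) (c : Fin n) :
    (simpleRefl n r hr c).val =
      if c.val = r then r + 1 else if c.val = r + 1 then r else c.val := by
  simp only [simpleRefl_eq_swap, swap_apply_def, Fin.ext_iff, val_rPos, val_rSuccPos]
  split_ifs <;> simp

lemma apply_rPos_lt_or_gt (hr : r + 1 < n) (u : Sn n) :
    u (rPos hr) < u (rSuccPos hr) ∨ u (rSuccPos hr) < u (rPos hr) :=
  lt_or_gt_of_ne (u.injective.ne (rPos_lt_rSuccPos hr).ne)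

lemma len_mul_simpleRefl_of_lt (hr : r + 1 < n) {u : Sn n} (h : u (rPos hr) < u (rSuccPos hr)) :
    len (u * simpleRefl n r hr) = len u + 1 :=
  (len_mul_swap_eq_add_one_iff (rPos_lt_rSuccPos hr)).2
    ⟨h, fun c hc => by simp only [mem_Ioo, Fin.lt_def, val_rPos, val_rSuccPos] at hc; omega⟩

lemma len_mul_simpleRefl_of_gt (hr : r + 1 < n) {u : Sn n} (h : u (rSuccPos hr) < u (rPos hr)) :
    len (u * simpleRefl n r hr) + 1 = len u := by
  simpa using (len_mul_simpleRefl_of_lt hr (u := u * simpleRefl n r hr) (by simpa using h)).symm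

lemma len_lt_len_mul_simpleRefl_iff (hr : r + 1 < n) {u : Sn n} :
    len u < len (u * simpleRefl n r hr) ↔ u (rPos hr) < u (rSuccPos hr) := by
  rcases apply_rPos_lt_or_gt hr u with h | h
  · simp [h, len_mul_simpleRefl_of_lt hr h]
  · have := len_mul_simpleRefl_of_gt hr h
    simp only [not_lt_of_gt h, iff_false]
    omega

def CoversBy (w u : Sn n) (p q : Fin n) : Prop :=
  p < q ∧ w = u * swap p q ∧ len w = len u + 1

lemma CoversBy.unique {w u : Sn n} {p q p' q' : Fin n} (h : CoversBy w u p q)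
    (h' : CoversBy w u p' q') : p = p' ∧ q = q' := by
  obtain ⟨hpq, rfl, -⟩ := h
  obtain ⟨hpq', hw, -⟩ := h'
  have hs := mul_left_cancel hw
  have hp := congr($hs p)
  simp only [swap_apply_left, swap_apply_def] at hp
  split_ifs at hp <;> simp only [Fin.lt_def, Fin.ext_iff] at * <;> omega

lemma CoversBy.apply_rPos_lt (hr : r + 1 < n) {w u : Sn n} {a b : Fin n} (h : CoversBy w u a b)
    (hne : ¬(a = rPos hr ∧ b = rSuccPos hr)) (hu : u (rPos hr) < u (rSuccPos hr)) :
    w (rPos hr) < w (rSuccPos hr) := by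
  obtain ⟨hab, rfl, hlen⟩ := h
  obtain ⟨hlt, hgap⟩ := (len_mul_swap_eq_add_one_iff hab).1 hlen
  have gap {c : Fin n} (h1 : a < c) (h2 : c < b) : u c < u a ∨ u b < u c := by
    have := hgap c (mem_Ioo.2 ⟨h1, h2⟩)
    rcases lt_or_gt_of_ne (u.injective.ne h1.ne') with h | h
    · exact .inl h
    · exact .inr (lt_of_le_of_ne (not_lt.1 (this ⟨h, ·⟩)) (u.injective.ne h2.ne'))
  have hxy := rPos_lt_rSuccPos hr
  simp only [Perm.mul_apply, swap_apply_def]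
  split_ifs with h1 h2 h3 h4 h5 h6 h7 h8
  · exact absurd (h1.trans h2.symm) hxy.ne
  · exact absurd ⟨h1.symm, h3.symm⟩ hne
  · subst h1
    have hb : rSuccPos hr ≤ b := by simpa [Fin.lt_def, Fin.le_def] using hab
    exact (gap hxy (lt_of_le_of_ne hb h3)).resolve_left
      fun h => absurd (hu.trans h) (lt_irrefl _)
  · exact hlt
  · exact absurd (h4.trans h6.symm) hxy.ne
  · exact hlt.trans (h4 ▸ hu)
  · exact (h7 ▸ hu).trans hlt
  · subst h8
    have ha : a ≤ rPos hr := by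
      simpa [Fin.lt_def, Fin.le_def, Nat.lt_succ_iff] using hab
    exact (gap (lt_of_le_of_ne ha (Ne.symm h1)) hxy).resolve_right
      fun h => absurd (hu.trans h) (lt_irrefl _)
  · exact hu

lemma simpleRefl_apply_lt_simpleRefl_apply (hr : r + 1 < n) {p q : Fin n} (hpq : p < q)
    (hne : ¬(p = rPos hr ∧ q = rSuccPos hr)) : simpleRefl n r hr p < simpleRefl n r hr q := by
  rw [Fin.lt_def, val_simpleRefl_apply, val_simpleRefl_apply]
  simp only [Fin.lt_def, Fin.ext_iff, val_rPos, val_rSuccPos] at hpq hne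
  split_ifs <;> omega

lemma mul_swap_mul_simpleRefl (hr : r + 1 < n) (u : Sn n) (p q : Fin n) :
    u * swap p q * simpleRefl n r hr =
      u * simpleRefl n r hr * swap (simpleRefl n r hr p) (simpleRefl n r hr q) := by
  rw [swap_apply_apply, simpleRefl_eq_swap, swap_inv]
  simp only [mul_assoc, swap_mul_self_mul]

lemma CoversBy.mul_simpleRefl (hr : r + 1 < n) {w u : Sn n} {p q : Fin n} (h : CoversBy w u p q)
    (hpq : ¬(p = rPos hr ∧ q = rSuccPos hr))
    (hasc : u (rPos hr) < u (rSuccPos hr) ↔ w (rPos hr) < w (rSuccPos hr)) :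
    CoversBy (w * simpleRefl n r hr) (u * simpleRefl n r hr)
      (simpleRefl n r hr p) (simpleRefl n r hr q) := by
  obtain ⟨hlt, rfl, hlen⟩ := h
  refine ⟨simpleRefl_apply_lt_simpleRefl_apply hr hlt hpq, mul_swap_mul_simpleRefl hr u p q, ?_⟩
  rcases apply_rPos_lt_or_gt hr u with hu | hu
  · have := len_mul_simpleRefl_of_lt hr hu
    have := len_mul_simpleRefl_of_lt hr (hasc.1 hu)
    omega
  · have hw := (apply_rPos_lt_or_gt hr (u * swap p q)).resolve_left (hasc.not.1 hu.not_gt)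
    have := len_mul_simpleRefl_of_gt hr hu
    have := len_mul_simpleRefl_of_gt hr hw
    omega

def IsMonkCover (j : ℤ) (w u : Sn n) : Prop :=
  ∃ p q, CoversBy w u p q ∧ (p.val : ℤ) ≤ j ∧ j < q.val

lemma straddles_simpleRefl_iff (hr : r + 1 < n) {j : ℤ} (hj : j ≠ r) (p q : Fin n) :
    ((simpleRefl n r hr p).val ≤ j ∧ j < (simpleRefl n r hr q).val) ↔
      ((p.val : ℤ) ≤ j ∧ j < q.val) := by
  rw [val_simpleRefl_apply, val_simpleRefl_apply]
  split_ifs <;> push_cast <;> omega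

lemma isMonkCover_natCast_iff {w u : Sn n} :
    IsMonkCover r w u ↔
      ∃ a b : Fin n, a.val ≤ r ∧ r < b.val ∧ w = u * swap a b ∧ len w = len u + 1 := by
  constructor
  · rintro ⟨p, q, ⟨-, hw, hlen⟩, hp, hq⟩
    exact ⟨p, q, by omega, by omega, hw, hlen⟩
  · rintro ⟨a, b, ha, hb, hw, hlen⟩
    exact ⟨a, b, ⟨Fin.lt_def.2 (by omega), hw, hlen⟩, by omega, by omega⟩

lemma not_eq_rPos_and_eq_rSuccPos (hr : r + 1 < n) {j : ℤ} (hj : j ≠ r) {p q : Fin n}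
    (hpj : (p.val : ℤ) ≤ j) (hjq : j < q.val) : ¬(p = rPos hr ∧ q = rSuccPos hr) := by
  rintro ⟨rfl, rfl⟩
  simp only [val_rPos, val_rSuccPos] at hpj hjq
  omega

lemma IsMonkCover.mul_simpleRefl (hr : r + 1 < n) {j : ℤ} (hj : j ≠ r) {w u : Sn n}
    (h : IsMonkCover j w u)
    (hasc : u (rPos hr) < u (rSuccPos hr) ↔ w (rPos hr) < w (rSuccPos hr)) :
    IsMonkCover j (w * simpleRefl n r hr) (u * simpleRefl n r hr) := by
  obtain ⟨p, q, hcov, hpj, hjq⟩ := h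
  exact ⟨_, _, hcov.mul_simpleRefl hr (not_eq_rPos_and_eq_rSuccPos hr hj hpj hjq) hasc,
    (straddles_simpleRefl_iff hr hj p q).2 ⟨hpj, hjq⟩⟩

lemma IsMonkCover.apply_rPos_lt (hr : r + 1 < n) {j : ℤ} (hj : j ≠ r) {w u : Sn n}
    (h : IsMonkCover j w u) (hu : u (rPos hr) < u (rSuccPos hr)) :
    w (rPos hr) < w (rSuccPos hr) := by
  obtain ⟨p, q, hcov, hpj, hjq⟩ := h
  exact hcov.apply_rPos_lt hr (not_eq_rPos_and_eq_rSuccPos hr hj hpj hjq) hu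

open Classical in
/-- Column `u` lists the Monk expansion of `σ^{s_j} σ^u`. The index `j` runs over `ℤ` so that
`monkMatrix n (r - 1)` is meaningful (and `0`) for `r = 0`. -/
noncomputable def monkMatrix (n : ℕ) (j : ℤ) : Matrix (Sn n) (Sn n) ℤ :=
  of fun w u => if IsMonkCover j w u then 1 else 0

open Classical in
/-- The divided difference `∂_r`, sending `σ^x` to `σ^{x s_r}` if `ℓ(x s_r) < ℓ(x)` and to `0`
otherwise. -/
noncomputable def divDiffMatrix (hr : r + 1 < n) : Matrix (Sn n) (Sn n) ℤ :=
  of fun z x => if z (rPos hr) < z (rSuccPos hr) ∧ x = z * simpleRefl n r hr then 1 else 0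

open Classical in
lemma monkMatrix_apply (j : ℤ) (w u : Sn n) :
    monkMatrix n j w u = if IsMonkCover j w u then 1 else 0 :=
  rfl

lemma monkMatrix_eq_zero {j : ℤ} (hj : j < 0 ∨ n ≤ j + 1) : monkMatrix n j = 0 := by
  ext w u
  refine if_neg fun ⟨p, q, _, hp, hq⟩ => ?_
  have := q.isLt
  omega

open Classical in
lemma divDiffMatrix_mul_apply (hr : r + 1 < n) (X : Matrix (Sn n) (Sn n) ℤ) (z u : Sn n) :
    (divDiffMatrix hr * X) z u =
      if z (rPos hr) < z (rSuccPos hr) then X (z * simpleRefl n r hr) u else 0 := by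
  rw [mul_apply, sum_eq_single (z * simpleRefl n r hr)]
  · simp [divDiffMatrix]
  · intro x _ hx
    simp [divDiffMatrix, hx]
  · simp

open Classical in
lemma mul_divDiffMatrix_apply (hr : r + 1 < n) (X : Matrix (Sn n) (Sn n) ℤ) (z u : Sn n) :
    (X * divDiffMatrix hr) z u =
      if u (rSuccPos hr) < u (rPos hr) then X z (u * simpleRefl n r hr) else 0 := by
  rw [mul_apply, sum_eq_single (u * simpleRefl n r hr)]
  · simp [divDiffMatrix]
  · intro x _ hx
    have : u ≠ x * simpleRefl n r hr := fun h => hx (by simp [h])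
    simp [divDiffMatrix, this]
  · simp

lemma divDiffMatrix_mul_monkMatrix_of_ne (hr : r + 1 < n) {j : ℤ} (hj : j ≠ r) :
    divDiffMatrix hr * monkMatrix n j = monkMatrix n j * divDiffMatrix hr := by
  classical
  ext z u
  rw [divDiffMatrix_mul_apply, mul_divDiffMatrix_apply, monkMatrix_apply, monkMatrix_apply]
  rw [← ite_and, ← ite_and]
  refine if_congr ⟨fun ⟨hz, hcov⟩ => ?_, fun ⟨hu, hcov⟩ => ?_⟩ rfl rfl
  · have hu : u (rSuccPos hr) < u (rPos hr) := (apply_rPos_lt_or_gt hr u).resolve_left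
      fun hu => (hcov.apply_rPos_lt hr hj hu).not_gt (by simpa using hz)
    have hasc : u (rPos hr) < u (rSuccPos hr) ↔
        (z * simpleRefl n r hr) (rPos hr) < (z * simpleRefl n r hr) (rSuccPos hr) := by
      simp [hu.not_gt, hz.not_gt]
    exact ⟨hu, by simpa using hcov.mul_simpleRefl hr hj hasc⟩
  · have hz := hcov.apply_rPos_lt hr hj (by simpa using hu)
    have hasc : (u * simpleRefl n r hr) (rPos hr) < (u * simpleRefl n r hr) (rSuccPos hr) ↔
        z (rPos hr) < z (rSuccPos hr) := by
      simp [hu, hz]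
    exact ⟨hz, by simpa using hcov.mul_simpleRefl hr hj hasc⟩

open Classical in
lemma monkMatrix_apply_of_coversBy {w u : Sn n} {p q : Fin n} (h : CoversBy w u p q) (j : ℤ) :
    monkMatrix n j w u = if (p.val : ℤ) ≤ j ∧ j < q.val then 1 else 0 := by
  rw [monkMatrix_apply]
  refine if_congr ⟨fun ⟨p', q', h', hp, hq⟩ => ?_, fun hj => ⟨p, q, h, hj⟩⟩ rfl rfl
  obtain ⟨rfl, rfl⟩ := h.unique h'
  exact ⟨hp, hq⟩

lemma monkMatrix_apply_of_forall_not_coversBy {w u : Sn n} (h : ∀ p q, ¬CoversBy w u p q)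
    (j : ℤ) : monkMatrix n j w u = 0 :=
  if_neg fun ⟨p, q, hcov, _⟩ => h p q hcov

/-- Multiplication by `s_r(σ^{s_r}) = σ^{s_{r-1}} - σ^{s_r} + σ^{s_{r+1}}`. -/
noncomputable def twistedMonkMatrix (n r : ℕ) : Matrix (Sn n) (Sn n) ℤ :=
  monkMatrix n (r - 1) + monkMatrix n (r + 1) - monkMatrix n r

lemma coversBy_mul_simpleRefl (hr : r + 1 < n) {u : Sn n} (hu : u (rPos hr) < u (rSuccPos hr)) :
    CoversBy (u * simpleRefl n r hr) u (rPos hr) (rSuccPos hr) :=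
  ⟨rPos_lt_rSuccPos hr, rfl, len_mul_simpleRefl_of_lt hr hu⟩

lemma eq_of_coversBy_mul_simpleRefl (hr : r + 1 < n) {z y : Sn n}
    (h : CoversBy (z * simpleRefl n r hr) y (rPos hr) (rSuccPos hr)) : z = y :=
  mul_right_cancel h.2.1

lemma apply_rPos_lt_and_isMonkCover_iff (hr : r + 1 < n) {z u : Sn n}
    (hu : u (rPos hr) < u (rSuccPos hr)) :
    z (rPos hr) < z (rSuccPos hr) ∧ IsMonkCover r (z * simpleRefl n r hr) u ↔ z = u := by
  constructor
  · rintro ⟨hz, p, q, hcov, -⟩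
    by_contra hzu
    have hpq : ¬(p = rPos hr ∧ q = rSuccPos hr) := by
      rintro ⟨rfl, rfl⟩
      exact hzu (eq_of_coversBy_mul_simpleRefl hr hcov)
    exact (hcov.apply_rPos_lt hr hpq hu).not_gt (by simpa using hz)
  · rintro rfl
    exact ⟨hu, _, _, coversBy_mul_simpleRefl hr (by simpa using hu), by simp, by simp⟩

lemma twistedMonkMatrix_apply_mul_simpleRefl (hr : r + 1 < n) {u : Sn n}
    (hu : u (rPos hr) < u (rSuccPos hr)) :
    twistedMonkMatrix n r (u * simpleRefl n r hr) u = -1 := by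
  simp [twistedMonkMatrix, monkMatrix_apply_of_coversBy (coversBy_mul_simpleRefl hr hu)]

lemma monkMatrix_apply_mul_simpleRefl_of_coversBy (hr : r + 1 < n) {z u : Sn n} {p q : Fin n}
    (hu : u (rPos hr) < u (rSuccPos hr)) (h : CoversBy z u p q)
    (hpq : ¬(p = rPos hr ∧ q = rSuccPos hr)) :
    z (rPos hr) < z (rSuccPos hr) ∧
      monkMatrix n r (z * simpleRefl n r hr) (u * simpleRefl n r hr) =
        twistedMonkMatrix n r z u := by
  have hz := h.apply_rPos_lt hr hpq hu
  refine ⟨hz, ?_⟩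
  rw [monkMatrix_apply_of_coversBy (h.mul_simpleRefl hr hpq (iff_of_true hu hz)),
    twistedMonkMatrix, Matrix.sub_apply, Matrix.add_apply, monkMatrix_apply_of_coversBy h,
    monkMatrix_apply_of_coversBy h, monkMatrix_apply_of_coversBy h, val_simpleRefl_apply,
    val_simpleRefl_apply]
  have hlt := h.1
  simp only [Fin.lt_def, Fin.ext_iff, val_rPos, val_rSuccPos] at hlt hpq
  split_ifs <;> push_cast at * <;> omega

lemma not_isMonkCover_mul_simpleRefl (hr : r + 1 < n) {z u : Sn n}
    (hu : u (rPos hr) < u (rSuccPos hr)) (hz : z (rPos hr) < z (rSuccPos hr))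
    (hzu : z ≠ u * simpleRefl n r hr)
    (h : ∀ p q, ¬CoversBy z u p q) :
    ¬IsMonkCover r (z * simpleRefl n r hr) (u * simpleRefl n r hr) := by
  rintro ⟨p, q, hcov, -⟩
  have hpq : ¬(p = rPos hr ∧ q = rSuccPos hr) := by
    rintro ⟨rfl, rfl⟩
    exact hzu (eq_of_coversBy_mul_simpleRefl hr hcov)
  have hasc : (u * simpleRefl n r hr) (rPos hr) < (u * simpleRefl n r hr) (rSuccPos hr) ↔
      (z * simpleRefl n r hr) (rPos hr) < (z * simpleRefl n r hr) (rSuccPos hr) := by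
    simp [hu.not_gt, hz.not_gt]
  exact h _ _ (by simpa using hcov.mul_simpleRefl hr hpq hasc)

lemma divDiffMatrix_mul_monkMatrix_self (hr : r + 1 < n) :
    divDiffMatrix hr * monkMatrix n r = 1 + twistedMonkMatrix n r * divDiffMatrix hr := by
  classical
  ext z u
  rw [Matrix.add_apply, one_apply, divDiffMatrix_mul_apply, mul_divDiffMatrix_apply]
  rcases apply_rPos_lt_or_gt hr u with hu | hu
  · rw [if_neg hu.not_gt, add_zero, monkMatrix_apply, ← ite_and]
    exact if_congr (apply_rPos_lt_and_isMonkCover_iff hr hu) rfl rfl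
  rw [if_pos hu]
  obtain ⟨u, rfl⟩ : ∃ u', u = u' * simpleRefl n r hr := ⟨u * simpleRefl n r hr, by simp⟩
  replace hu : u (rPos hr) < u (rSuccPos hr) := by simpa using hu
  rw [mul_simpleRefl_mul_simpleRefl]
  by_cases hzu : z = u * simpleRefl n r hr
  · subst hzu
    simp [hu.not_gt, twistedMonkMatrix_apply_mul_simpleRefl hr hu]
  rw [if_neg hzu, zero_add]
  by_cases hcov : ∃ p q, CoversBy z u p q
  · obtain ⟨p, q, hcov⟩ := hcov
    have hpq : ¬(p = rPos hr ∧ q = rSuccPos hr) := by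
      rintro ⟨rfl, rfl⟩
      exact hzu hcov.2.1
    obtain ⟨hz, heq⟩ := monkMatrix_apply_mul_simpleRefl_of_coversBy hr hu hcov hpq
    rw [if_pos hz, heq]
  · simp only [not_exists] at hcov
    simp only [twistedMonkMatrix, Matrix.sub_apply, Matrix.add_apply,
      monkMatrix_apply_of_forall_not_coversBy hcov, sub_self, add_zero, ite_eq_right_iff,
      monkMatrix_apply, ite_eq_right_iff, one_ne_zero]
    exact fun hz => not_isMonkCover_mul_simpleRefl hr hu hz hzu hcov

lemma eq_one_of_inversions_eq_empty {w : Sn n} (h : inversions w = ∅) : w = 1 := by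
  have hmono : StrictMono w := fun i k hik =>
    lt_of_le_of_ne (not_lt.1 fun hki => (eq_empty_iff_forall_notMem.1 h) (i, k)
      (mem_inversions.2 ⟨hik, hki⟩)) (w.injective.ne hik.ne)
  have := (hmono.range_inj strictMono_id).1 (by simp [Set.range_eq_univ.2 w.surjective])
  exact Equiv.ext (congr_fun this)

noncomputable def transitionKey (w : Sn n) : ℕ ×ₗ (Colex (Fin n → Fin n))ᵒᵈ :=
  toLex (len w, OrderDual.toDual (toColex ⇑w))

lemma transitionKey_lt_iff {x w : Sn n} :
    transitionKey x < transitionKey w ↔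
      len x < len w ∨ len x = len w ∧ ∃ i, (∀ m, i < m → w m = x m) ∧ w i < x i :=
  Prod.Lex.toLex_lt_toLex

structure IsLexMaxInversion (w : Sn n) (j b : Fin n) : Prop where
  lt : j < b
  apply_lt_apply : w b < w j
  strictMonoOn : StrictMonoOn w (Set.Ioi j)
  apply_lt_apply_of_lt : ∀ q, b < q → w j < w q

lemma exists_isLexMaxInversion {w : Sn n} (hw : w ≠ 1) : ∃ j b, IsLexMaxInversion w j b := by
  have hne : (inversions w).Nonempty :=
    nonempty_iff_ne_empty.2 fun h => hw (eq_one_of_inversions_eq_empty h)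
  obtain ⟨⟨j, b⟩, hjb, hmax⟩ := (inversions w).exists_max_image toLex hne
  rw [mem_inversions] at hjb
  have not_inv {c d : Fin n} (hcd : c < d) (h : toLex (j, b) < toLex (c, d)) : w c < w d :=
    lt_of_le_of_ne (not_lt.1 fun hdc => h.not_ge (hmax _ (mem_inversions.2 ⟨hcd, hdc⟩)))
      (w.injective.ne hcd.ne)
  exact ⟨j, b, hjb.1, hjb.2,
    fun c hc _ _ hcd => not_inv hcd (Prod.Lex.toLex_lt_toLex.2 (.inl hc)),
    fun q hbq => not_inv (hjb.1.trans hbq) (Prod.Lex.toLex_lt_toLex.2 (.inr ⟨rfl, hbq⟩))⟩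

namespace IsLexMaxInversion

variable {w : Sn n} {j b : Fin n}

lemma coversBy (h : IsLexMaxInversion w j b) : CoversBy w (w * swap j b) j b := by
  refine ⟨h.lt, by simp, ?_⟩
  have := (len_mul_swap_eq_add_one_iff h.lt (u := w * swap j b)).2
    ⟨by simpa using h.apply_lt_apply, fun c hc => ?_⟩
  · simpa using this
  rw [mem_Ioo] at hc
  simp only [Perm.mul_apply, swap_apply_left, swap_apply_right,
    swap_apply_of_ne_of_ne hc.1.ne' hc.2.ne]
  exact fun hbc => hbc.1.not_gt (h.strictMonoOn hc.1 h.lt hc.2)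

lemma eq_of_coversBy (h : IsLexMaxInversion w j b) {z : Sn n} {q : Fin n}
    (hz : CoversBy z (w * swap j b) j q) : z = w := by
  obtain ⟨hjq, rfl, hlen⟩ := hz
  obtain ⟨hlt, hgap⟩ := (len_mul_swap_eq_add_one_iff hjq).1 hlen
  rcases lt_trichotomy q b with hqb | rfl | hbq
  · simp only [Perm.mul_apply, swap_apply_left, swap_apply_of_ne_of_ne hjq.ne' hqb.ne] at hlt
    exact absurd (h.strictMonoOn hjq h.lt hqb) hlt.not_gt
  · simp
  · refine absurd ⟨?_, ?_⟩ (hgap b (mem_Ioo.2 ⟨h.lt, hbq⟩)) <;>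
      simp only [Perm.mul_apply, swap_apply_left, swap_apply_right,
        swap_apply_of_ne_of_ne hjq.ne' hbq.ne']
    · exact h.apply_lt_apply
    · exact h.apply_lt_apply_of_lt q hbq

lemma transitionKey_lt (h : IsLexMaxInversion w j b) {x : Sn n} {p : Fin n}
    (hx : CoversBy x (w * swap j b) p j) : transitionKey x < transitionKey w := by
  obtain ⟨hpj, rfl, hlen⟩ := hx
  have := h.coversBy.2.2
  refine transitionKey_lt_iff.2 (.inr ⟨by omega, b, fun m hbm => ?_, ?_⟩)
  · have hjm := h.lt.trans hbm
    simp [swap_apply_of_ne_of_ne (hpj.trans hjm).ne' hjm.ne',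
      swap_apply_of_ne_of_ne hjm.ne' hbm.ne']
  · simpa [swap_apply_of_ne_of_ne (hpj.trans h.lt).ne' h.lt.ne'] using h.apply_lt_apply

end IsLexMaxInversion

open Classical in
lemma monkMatrix_sub_monkMatrix_apply (j : Fin n) (z v : Sn n) :
    (monkMatrix n j.val - monkMatrix n (j.val - 1)) z v =
      (if ∃ q, CoversBy z v j q then 1 else 0) - (if ∃ p, CoversBy z v p j then 1 else 0) := by
  rw [Matrix.sub_apply]
  by_cases h : ∃ p q, CoversBy z v p q
  · obtain ⟨p, q, h⟩ := h
    have hj : (∃ q', CoversBy z v j q') ↔ p = j :=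
      ⟨fun ⟨_, h'⟩ => (h.unique h').1, fun e => ⟨q, e ▸ h⟩⟩
    have hj' : (∃ p', CoversBy z v p' j) ↔ q = j :=
      ⟨fun ⟨_, h'⟩ => (h.unique h').2, fun e => ⟨p, e ▸ h⟩⟩
    simp only [monkMatrix_apply_of_coversBy h, hj, hj']
    have hpq := h.1
    simp only [Fin.lt_def, Fin.ext_iff] at hpq ⊢
    split_ifs <;> omega
  · simp only [not_exists] at h
    simp [monkMatrix_apply_of_forall_not_coversBy h, h]

/-- Monk's rule for `x_j = σ^{s_j} - σ^{s_{j-1}}` applied to `σ^v` (Lascoux–Schützenberger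
transition). -/
lemma exists_transition {w : Sn n} (hw : w ≠ 1) :
    ∃ (j : Fin n) (v : Sn n) (C : Finset (Sn n)), transitionKey v < transitionKey w ∧
      (∀ x ∈ C, transitionKey x < transitionKey w) ∧
      Pi.single w 1 = (monkMatrix n j.val - monkMatrix n (j.val - 1)) *ᵥ Pi.single v 1 +
        ∑ x ∈ C, Pi.single x 1 := by
  classical
  obtain ⟨j, b, h⟩ := exists_isLexMaxInversion hw
  have hlen := h.coversBy.2.2
  refine ⟨j, w * swap j b, ({x | ∃ p, CoversBy x (w * swap j b) p j} : Finset (Sn n)),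
    transitionKey_lt_iff.2 (.inl (by omega)),
    fun x hx => h.transitionKey_lt (mem_filter.1 hx).2.choose_spec, ?_⟩
  ext z
  have hw : (∃ q, CoversBy z (w * swap j b) j q) ↔ z = w :=
    ⟨fun ⟨_, hz⟩ => h.eq_of_coversBy hz, fun hz => ⟨b, hz ▸ h.coversBy⟩⟩
  simp only [Pi.add_apply, mulVec_single_one, col_apply, monkMatrix_sub_monkMatrix_apply,
    Finset.sum_apply, Pi.single_apply, sum_ite_eq, mem_filter, mem_univ, true_and, hw]
  ring

lemma single_mem_of_monkMatrix_mulVec_mem (S : Submodule ℤ (Sn n → ℤ)) (h1 : Pi.single 1 1 ∈ S)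
    (hS : ∀ (j : ℤ), ∀ v ∈ S, monkMatrix n j *ᵥ v ∈ S) (w : Sn n) : Pi.single w 1 ∈ S := by
  have wf : WellFounded fun x w : Sn n => transitionKey x < transitionKey w :=
    @Finite.wellFounded_of_trans_of_irrefl _ _ _ ⟨fun _ _ _ => lt_trans⟩ ⟨fun _ => lt_irrefl _⟩
  induction w using wf.induction with
  | _ w ih =>
    by_cases hw : w = 1
    · exact hw ▸ h1
    obtain ⟨j, v, C, hv, hC, heq⟩ := exists_transition hw
    rw [heq, sub_mulVec]
    exact S.add_mem (S.sub_mem (hS _ _ (ih v hv)) (hS _ _ (ih v hv)))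
      (S.sum_mem fun x hx => ih x (hC x hx))

lemma eq_zero_of_mul_monkMatrix_eq (φ : Matrix (Sn n) (Sn n) ℤ) (T : ℤ → Matrix (Sn n) (Sn n) ℤ)
    (hφ : ∀ j, φ * monkMatrix n j = T j * φ) (h1 : φ *ᵥ Pi.single 1 1 = 0) : φ = 0 := by
  refine ext_of_mulVec_single fun w => ?_
  have := single_mem_of_monkMatrix_mulVec_mem (LinearMap.ker φ.mulVecLin) h1
    (fun j v hv => by
      rw [LinearMap.mem_ker, mulVecLin_apply] at hv ⊢
      rw [mulVec_mulVec, hφ, ← mulVec_mulVec, hv, mulVec_zero]) w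
  rw [zero_mulVec]
  simpa using this

open Classical in
lemma divDiffMatrix_mulVec_single (hr : r + 1 < n) (x : Sn n) :
    divDiffMatrix hr *ᵥ Pi.single x 1 =
      if x (rSuccPos hr) < x (rPos hr) then Pi.single (x * simpleRefl n r hr) 1 else 0 := by
  ext z
  rw [mulVec_single_one, col_apply, divDiffMatrix, of_apply]
  split_ifs with h1 h2 h2
  · simp [h1.2]
  · exact absurd (by simpa [h1.2] using h1.1) h2
  · rw [Pi.single_apply, if_neg fun hz => h1 ⟨by simpa [hz] using h2, by simp [hz]⟩]
  · rfl

/-- The Leibniz rule `∂(fg) = ∂f · g + s_r(f) · ∂g` for multiplication operators `A` by `f` and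
`A'` by `∂f`, using `s_r(f) = f - (x_r - x_{r+1}) ∂f` and
`x_r - x_{r+1} = 2σ^{s_r} - σ^{s_{r-1}} - σ^{s_{r+1}}`. -/
lemma divDiffMatrix_mul_eq (hr : r + 1 < n)
    (hM : ∀ j k : ℤ, Commute (monkMatrix n j) (monkMatrix n k)) {A A' : Matrix (Sn n) (Sn n) ℤ}
    (hA : ∀ j, Commute A (monkMatrix n j)) (hA' : ∀ j, Commute A' (monkMatrix n j))
    (h1 : divDiffMatrix hr *ᵥ (A *ᵥ Pi.single 1 1) = A' *ᵥ Pi.single 1 1) :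
    divDiffMatrix hr * A =
      A' + (A - A' * (monkMatrix n r - twistedMonkMatrix n r)) * divDiffMatrix hr := by
  classical
  set D := divDiffMatrix hr
  set M := monkMatrix n
  set T := twistedMonkMatrix n r
  set E := A - A' * (M r - T) with hEdef
  have hT (j : ℤ) : Commute T (M j) := ((hM _ j).add_left (hM _ j)).sub_left (hM _ j)
  have hE (j : ℤ) : Commute E (M j) :=
    (hA j).sub_left ((hA' j).mul_left ((hM r j).sub_left (hT j)))
  suffices D * A - A' - E * D = 0 by rwa [sub_sub, sub_eq_zero] at this
  refine eq_zero_of_mul_monkMatrix_eq _ (fun j => if j = r then T else M j) (fun j => ?_) ?_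
  · split_ifs with hj
    · subst hj
      have hET : Commute E T := ((hE _).add_right (hE _)).sub_right (hE _)
      have hA'T : Commute A' T := ((hA' _).add_right (hA' _)).sub_right (hA' _)
      calc (D * A - A' - E * D) * M r = D * M r * A - A' * M r - E * (D * M r) := by
            rw [sub_mul, sub_mul, mul_assoc D, (hA _).eq, ← mul_assoc, mul_assoc E]
        _ = T * (D * A - A' - E * D) + (A - E - A' * (M r - T)) := by
            rw [divDiffMatrix_mul_monkMatrix_self hr, add_mul, one_mul, mul_add, mul_one,
              ← mul_assoc E T, hET.eq, mul_sub A', hA'T.eq]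
            noncomm_ring
        _ = T * (D * A - A' - E * D) := by rw [hEdef]; noncomm_ring
    · have hDM : D * M j = M j * D := divDiffMatrix_mul_monkMatrix_of_ne hr hj
      calc (D * A - A' - E * D) * M j = D * M j * A - A' * M j - E * (D * M j) := by
            rw [sub_mul, sub_mul, mul_assoc D, (hA _).eq, ← mul_assoc, mul_assoc E]
        _ = M j * (D * A - A' - E * D) := by
            rw [hDM, ← mul_assoc E, (hE j).eq, (hA' j).eq]
            noncomm_ring
  · rw [sub_mulVec, sub_mulVec, ← mulVec_mulVec, h1, ← mulVec_mulVec,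
      divDiffMatrix_mulVec_single]
    simp [(rPos_lt_rSuccPos hr).not_gt]

def mulMatrix (N : Sn n → Sn n → Sn n → ℤ) (u : Sn n) : Matrix (Sn n) (Sn n) ℤ :=
  of fun w v => N u v w

section Ring

variable {A : Type} [CommRing A] {σ : Sn n → A} {N : Sn n → Sn n → Sn n → ℤ}

lemma mul_linearCombination (hprod : ∀ u v, σ u * σ v = ∑ w, N u v w • σ w) (u : Sn n)
    (c : Sn n → ℤ) :
    σ u * Fintype.linearCombination ℤ σ c =
      Fintype.linearCombination ℤ σ (mulMatrix N u *ᵥ c) := by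
  simp only [Fintype.linearCombination_apply, mul_sum, mul_smul_comm, hprod, smul_sum, smul_smul,
    mulVec, dotProduct, mulMatrix, of_apply, sum_smul]
  rw [sum_comm]
  simp only [mul_comm]

lemma mulMatrix_eq_of_mul_eq (hLI : LinearIndependent ℤ σ)
    (hprod : ∀ u v, σ u * σ v = ∑ w, N u v w • σ w) {u : Sn n} {X : Matrix (Sn n) (Sn n) ℤ}
    (hX : ∀ v, σ u * σ v = ∑ w, X w v • σ w) : mulMatrix N u = X := by
  ext w v
  exact Fintype.linearIndependent_iffₛ.1 hLI _ _ ((hprod u v).symm.trans (hX v)) w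

lemma mulMatrix_mulVec_single_one (hLI : LinearIndependent ℤ σ) (hone : σ 1 = 1)
    (hprod : ∀ u v, σ u * σ v = ∑ w, N u v w • σ w) (u : Sn n) :
    mulMatrix N u *ᵥ Pi.single 1 1 = Pi.single u 1 := by
  classical
  refine funext (Fintype.linearIndependent_iffₛ.1 hLI _ _ ?_)
  rw [← Fintype.linearCombination_apply, ← Fintype.linearCombination_apply,
    ← mul_linearCombination hprod]
  simp [hone]

lemma commute_mulMatrix (hLI : LinearIndependent ℤ σ)
    (hprod : ∀ u v, σ u * σ v = ∑ w, N u v w • σ w) (u v : Sn n) :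
    Commute (mulMatrix N u) (mulMatrix N v) := by
  classical
  refine ext_of_mulVec_single fun x => funext (Fintype.linearIndependent_iffₛ.1 hLI _ _ ?_)
  simp only [← Fintype.linearCombination_apply, ← mulVec_mulVec, ← mul_linearCombination hprod]
  ring

end Ring

end Schubert

namespace IsSchubertConstants

open Schubert

variable {n : ℕ} {N : Sn n → Sn n → Sn n → ℤ}

lemma mulMatrix_mulVec_single_one (hN : IsSchubertConstants n N) (u : Sn n) :
    mulMatrix N u *ᵥ Pi.single 1 1 = Pi.single u 1 := by
  obtain ⟨A, _, σ, hLI, hone, hprod, -, -⟩ := hN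
  exact Schubert.mulMatrix_mulVec_single_one hLI hone hprod u

lemma commute_mulMatrix (hN : IsSchubertConstants n N) (u v : Sn n) :
    Commute (mulMatrix N u) (mulMatrix N v) := by
  obtain ⟨A, _, σ, hLI, -, hprod, -, -⟩ := hN
  exact Schubert.commute_mulMatrix hLI hprod u v

lemma mulMatrix_simpleRefl (hN : IsSchubertConstants n N) {r : ℕ} (hr : r + 1 < n) :
    mulMatrix N (simpleRefl n r hr) = monkMatrix n r := by
  classical
  obtain ⟨A, _, σ, hLI, -, hprod, -, hmonk⟩ := hN
  refine mulMatrix_eq_of_mul_eq hLI hprod fun v => ?_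
  simp only [hmonk r hr v, monkMatrix_apply, isMonkCover_natCast_iff]

lemma monkMatrix_eq_zero_or_exists (hN : IsSchubertConstants n N) (j : ℤ) :
    monkMatrix n j = 0 ∨ ∃ u, monkMatrix n j = mulMatrix N u := by
  by_cases hj : j < 0 ∨ n ≤ j + 1
  · exact .inl (monkMatrix_eq_zero hj)
  · obtain ⟨r, rfl⟩ := Int.eq_ofNat_of_zero_le (by omega : 0 ≤ j)
    exact .inr ⟨_, (hN.mulMatrix_simpleRefl (r := r) (by omega)).symm⟩

lemma commute_mulMatrix_monkMatrix (hN : IsSchubertConstants n N) (u : Sn n) (j : ℤ) :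
    Commute (mulMatrix N u) (monkMatrix n j) := by
  rcases hN.monkMatrix_eq_zero_or_exists j with h | ⟨v, h⟩ <;> rw [h]
  · exact Commute.zero_right _
  · exact hN.commute_mulMatrix u v

lemma commute_monkMatrix (hN : IsSchubertConstants n N) (j k : ℤ) :
    Commute (monkMatrix n j) (monkMatrix n k) := by
  rcases hN.monkMatrix_eq_zero_or_exists j with h | ⟨v, h⟩ <;> rw [h]
  · exact Commute.zero_left _
  · exact hN.commute_mulMatrix_monkMatrix v k

end IsSchubertConstants

open Schubert

theorem schubert_recursion_general (n : ℕ) (N : Sn n → Sn n → Sn n → ℤ)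
    (hN : IsSchubertConstants n N) (u v w : Sn n)
    (r : ℕ) (hr : r + 1 < n)
    (hu : len u < len (u * simpleRefl n r hr))
    (hv : len v < len (v * simpleRefl n r hr)) :
    (len w < len (w * simpleRefl n r hr) →
      N u v w = N (u * simpleRefl n r hr) v (w * simpleRefl n r hr)) ∧
    (len (w * simpleRefl n r hr) < len w → N u v w = 0) := by
  rw [len_lt_len_mul_simpleRefl_iff] at hu hv
  have hM := hN.commute_monkMatrix
  have hNM := hN.commute_mulMatrix_monkMatrix
  have hN1 := hN.mulMatrix_mulVec_single_one
  refine ⟨fun hw => ?_, fun hw => ?_⟩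
  · rw [len_lt_len_mul_simpleRefl_iff] at hw
    have hus : (u * simpleRefl n r hr) (rSuccPos hr) < (u * simpleRefl n r hr) (rPos hr) := by
      simpa using hu
    have leibniz := divDiffMatrix_mul_eq hr hM (hNM (u * simpleRefl n r hr)) (hNM u) (by
      rw [hN1, hN1, divDiffMatrix_mulVec_single, if_pos hus, mul_simpleRefl_mul_simpleRefl])
    have := congr_fun₂ leibniz w v
    rw [divDiffMatrix_mul_apply, if_pos hw, Matrix.add_apply, mul_divDiffMatrix_apply,
      if_neg hv.not_gt, add_zero] at this
    exact this.symm
  · have hws : (w * simpleRefl n r hr) (rPos hr) < (w * simpleRefl n r hr) (rSuccPos hr) :=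
      (len_lt_len_mul_simpleRefl_iff hr).1 (by simpa using hw)
    have leibniz := divDiffMatrix_mul_eq hr hM (hNM u) (fun _ => Commute.zero_left _) (A' := 0) (by
      rw [hN1, divDiffMatrix_mulVec_single, if_neg hu.not_gt, zero_mulVec])
    have := congr_fun₂ leibniz (w * simpleRefl n r hr) v
    rw [divDiffMatrix_mul_apply, if_pos hws, mul_simpleRefl_mul_simpleRefl, zero_mul, sub_zero,
      zero_add, mul_divDiffMatrix_apply, if_neg hv.not_gt] at this
    exact this

/-- For `u, v, w ∈ S_n` with `ℓ(w) = ℓ(u) + ℓ(v)` and a simple reflection `s_r` with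
`ℓ(u s_r) > ℓ(u)` and `ℓ(v s_r) > ℓ(v)`: if `ℓ(w s_r) > ℓ(w)` then
`N_{u,v}^w = N_{u s_r, v}^{w s_r}`, and if `ℓ(w s_r) < ℓ(w)` then `N_{u,v}^w = 0`. -/
theorem schubert_recursion (n : ℕ) (N : Sn n → Sn n → Sn n → ℤ)
    (hN : IsSchubertConstants n N) (u v w : Sn n) (hlw : len w = len u + len v)
    (r : ℕ) (hr : r + 1 < n)
    (hu : len u < len (u * simpleRefl n r hr))
    (hv : len v < len (v * simpleRefl n r hr)) :
    (len w < len (w * simpleRefl n r hr) →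
      N u v w = N (u * simpleRefl n r hr) v (w * simpleRefl n r hr)) ∧
    (len (w * simpleRefl n r hr) < len w → N u v w = 0) :=
  schubert_recursion_general n N hN u v w r hr hu hv
end

section
/- For the ladder diagram Λ(n_1,...,n_k;n), the number of edges on the roof equals Σ_{i=1}^{k} (n_{i+1} − n_{i−1}), and for each 1 ≤ i ≤ k there are exactly n_{i+1} − n_{i−1} special paths ending at the corner O_i. -/
/-- A positive path on the ladder diagram `Λ(n_1,…,n_k;n)` (with `ν 0 = 0`,
`ν (k+1) = n`), encoded by the set `S ⊆ {1,…,n}` of its horizontal step positions: it runs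
from `O_0` up/right towards one of the corners `O_j` (`1 ≤ j ≤ k`), so it has `ν j`
horizontal steps. -/
def PosPath (k n : ℕ) (ν : ℕ → ℕ) (S : Finset ℕ) : Prop :=
  S ⊆ Finset.Icc 1 n ∧ ∃ j, 1 ≤ j ∧ j ≤ k ∧ S.card = ν j

/-- The edge from `(x,y)` to `(x+1,y)` (if `horiz`), resp. `(x,y)` to `(x,y+1)`, lies on
the path with horizontal step set `S` (coordinates based at `O_0`). -/
def edgeOnF (n : ℕ) (S : Finset ℕ) (horiz : Bool) (x y : ℕ) : Prop :=
  (S ∩ Finset.Icc 1 (x + y)).card = x ∧ x + y < n ∧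
    (if horiz then (x + y + 1) ∈ S else (x + y + 1) ∉ S)

/-- The number of corners (direction changes) of the path with horizontal step set `S`. -/
def cornersF (n : ℕ) (S : Finset ℕ) : ℕ :=
  ((Finset.Icc 1 (n - 1)).filter fun t => ¬(t ∈ S ↔ t + 1 ∈ S)).card

/-- The path `S` has a corner containing the given edge: the edge lies on `S` and an
adjacent step of the path has the other direction. -/
def hasCornerAt (n : ℕ) (S : Finset ℕ) (horiz : Bool) (x y : ℕ) : Prop :=
  edgeOnF n S horiz x y ∧
    ((2 ≤ x + y + 1 ∧ ¬((x + y) ∈ S ↔ (x + y + 1) ∈ S)) ∨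
     (x + y + 2 ≤ n ∧ ¬((x + y + 1) ∈ S ↔ (x + y + 2) ∈ S)))

/-- The edges on the roof of the ladder diagram `Λ(n_1,…,n_k;n)`: the upper-right staircase
part of the boundary, from `L_1 = (0, n − ν 1)` down to the corner `O_k`. -/
def RoofEdge (k n : ℕ) (ν : ℕ → ℕ) (horiz : Bool) (x y : ℕ) : Prop :=
  if horiz then ∃ l, 1 ≤ l ∧ l ≤ k ∧ y + ν l = n ∧ ν (l - 1) ≤ x ∧ x < ν l
  else ∃ l, 1 ≤ l ∧ l ≤ k ∧ x = ν l ∧ n ≤ y + ν (l + 1) ∧ y + ν l < n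

/-- The special path associated with a roof edge `e` is the positive path with the fewest
corners among those having a corner containing `e`; a path is special if it arises this
way from some roof edge. -/
def IsSpecialPath (k n : ℕ) (ν : ℕ → ℕ) (S : Finset ℕ) : Prop :=
  PosPath k n ν S ∧ ∃ (h : Bool) (x y : ℕ), RoofEdge k n ν h x y ∧
    hasCornerAt n S h x y ∧
    ∀ S', PosPath k n ν S' → hasCornerAt n S' h x y → cornersF n S ≤ cornersF n S'

/-! A positive path through a roof edge next to the corner `O_l` cannot rise above the roof,
so it ends at `O_l` and after the edge runs along the roof; its corner at the edge is thus
formed with the preceding step. The explicit candidate (right, up, right through a horizontal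
edge; up, right, up through a vertical one) has at most two corners, so a minimizer has at
most one corner before that one: its prefix is one run of each direction, pinned down by the
number of horizontal steps made before the edge. Hence the special paths ending at `O_i`
correspond bijectively to the `ν (i + 1) - ν (i - 1)` roof edges adjacent to `O_i`. -/

open Finset

def IsCornerAfter (S : Finset ℕ) (t : ℕ) : Prop := ¬(t ∈ S ↔ t + 1 ∈ S)

theorem mem_iff_mem_of_forall_not_isCornerAfter {S : Finset ℕ} {a b : ℕ} (hab : a ≤ b)
    (h : ∀ t ∈ Ico a b, ¬IsCornerAfter S t) : a ∈ S ↔ b ∈ S := by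
  induction b, hab using Nat.le_induction with
  | base => rfl
  | succ b hab ih =>
    rw [ih fun t ht => h t (by simp only [mem_Ico] at ht ⊢; omega)]
    simpa [IsCornerAfter] using h b (by simp only [mem_Ico]; omega)

theorem exists_mem_iff_of_subsingleton_corners {S : Finset ℕ} {q : ℕ}
    (h : ∀ t ∈ Ico 1 q, ∀ t' ∈ Ico 1 q, IsCornerAfter S t → IsCornerAfter S t' → t = t') :
    ∃ c ≤ q, ∀ m ∈ Icc 1 q, (m ∈ S ↔ (c < m ↔ q ∈ S)) := by
  by_cases hex : ∃ t ∈ Ico 1 q, IsCornerAfter S t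
  · obtain ⟨t, htq, hct⟩ := hex
    have hconst : ∀ a b, a ≤ b → 1 ≤ a → b ≤ q → t ∉ Ico a b → (a ∈ S ↔ b ∈ S) :=
      fun a b hab ha hb hta => mem_iff_mem_of_forall_not_isCornerAfter hab fun s hs hcs =>
        hta (h s (by simp only [mem_Ico] at hs ⊢; omega) t htq hcs hct ▸ hs)
    simp only [mem_Ico] at htq
    refine ⟨t, htq.2.le, fun m hm => ?_⟩
    simp only [mem_Icc] at hm
    rcases le_or_gt m t with hmt | htm
    · rw [hconst m t hmt hm.1 htq.2.le (by simp),
        ← hconst (t + 1) q (by omega) (by omega) le_rfl (by simp)]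
      simp only [IsCornerAfter] at hct
      simp only [show ¬t < m by omega, false_iff]
      tauto
    · simp only [htm, true_iff]
      exact hconst m q hm.2 hm.1 le_rfl (by simp only [mem_Ico]; omega)
  · push Not at hex
    refine ⟨0, Nat.zero_le _, fun m hm => ?_⟩
    simp only [mem_Icc] at hm
    simpa [show 0 < m by omega] using mem_iff_mem_of_forall_not_isCornerAfter hm.2
      fun s hs => hex s (by simp only [mem_Ico] at hs ⊢; omega)

theorem card_le_cornersF {n : ℕ} {S T : Finset ℕ}
    (hT : ∀ t ∈ T, t ∈ Icc 1 (n - 1) ∧ IsCornerAfter S t) : #T ≤ cornersF n S :=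
  card_le_card fun t ht => mem_filter.2 (hT t ht)

theorem cornersF_le_two {n : ℕ} {S : Finset ℕ} (a b : ℕ)
    (h : ∀ t ∈ Icc 1 (n - 1), IsCornerAfter S t → t = a ∨ t = b) : cornersF n S ≤ 2 := by
  refine (card_le_card (t := {a, b}) fun t ht => ?_).trans card_le_two
  rw [mem_filter] at ht
  simpa using h t ht.1 ht.2

theorem subsingleton_corners_of_cornersF_le_two {n q : ℕ} {S : Finset ℕ}
    (hc : cornersF n S ≤ 2) (hq : q ∈ Icc 1 (n - 1)) (hcq : IsCornerAfter S q) :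
    ∀ t ∈ Ico 1 q, ∀ t' ∈ Ico 1 q, IsCornerAfter S t → IsCornerAfter S t' → t = t' := by
  intro t ht t' ht' hct hct'
  by_contra hne
  simp only [mem_Ico, mem_Icc] at ht ht' hq
  have hthree : #{t, t', q} = 3 := card_eq_three.2 ⟨t, t', q, hne, by omega, by omega, rfl⟩
  have := card_le_cornersF (n := n) (S := S) (T := {t, t', q}) fun s hs => by
    simp only [mem_insert, mem_singleton] at hs
    rcases hs with rfl | rfl | rfl
    exacts [⟨mem_Icc.2 ⟨by omega, by omega⟩, hct⟩, ⟨mem_Icc.2 ⟨by omega, by omega⟩, hct'⟩,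
      ⟨mem_Icc.2 hq, hcq⟩]
  omega

theorem eq_Icc_union_Icc_of_hasCornerAt {n x m : ℕ} {S : Finset ℕ} (hS : S ⊆ Icc 1 n)
    (hcard : #S = n - m) (hC : hasCornerAt n S true x m) (hc : cornersF n S ≤ 2) :
    S = Icc 1 x ∪ Icc (x + m + 1) n := by
  obtain ⟨⟨hpre, hlt, hmem⟩, hcorner⟩ := hC
  simp only [if_true] at hmem
  set q := x + m
  have hsuffix : S \ Icc 1 q = Icc (q + 1) n := by
    refine eq_of_subset_of_card_le (fun t ht => ?_) ?_
    · have := hS (mem_sdiff.1 ht).1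
      simp only [mem_sdiff, mem_Icc] at ht this ⊢
      omega
    · have := card_sdiff_add_card_inter S (Icc 1 q)
      rw [Nat.card_Icc]
      omega
  have hq : 1 ≤ q ∧ q ∉ S := by
    rcases hcorner with ⟨h1, h2⟩ | ⟨h1, h2⟩
    · exact ⟨by omega, fun h => h2 (iff_of_true h hmem)⟩
    · have : q + 2 ∈ S := (mem_sdiff.1 (hsuffix ▸ mem_Icc.2 ⟨by omega, h1⟩)).1
      exact absurd (iff_of_true hmem this) h2
  obtain ⟨c, hcq, hcS⟩ := exists_mem_iff_of_subsingleton_corners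
    (subsingleton_corners_of_cornersF_le_two hc (mem_Icc.2 ⟨hq.1, by omega⟩)
      fun h => hq.2 (h.2 hmem))
  have hprefix : S ∩ Icc 1 q = Icc 1 c := by
    ext t
    simp only [mem_inter, mem_Icc]
    constructor
    · rintro ⟨ht, ht1, htq⟩
      have := (hcS t (mem_Icc.2 ⟨ht1, htq⟩)).1 ht
      simp only [hq.2, iff_false] at this
      omega
    · rintro ⟨ht1, htc⟩
      refine ⟨(hcS t (mem_Icc.2 ⟨ht1, by omega⟩)).2 ?_, ht1, by omega⟩
      simp only [hq.2, iff_false]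
      omega
  rw [hprefix, Nat.card_Icc, Nat.add_sub_cancel] at hpre
  rw [← sdiff_union_inter S (Icc 1 q), hsuffix, hprefix, union_comm, hpre]

theorem eq_Icc_of_hasCornerAt {n x y : ℕ} {S : Finset ℕ} (hcard : #S = x)
    (hC : hasCornerAt n S false x y) (hc : cornersF n S ≤ 2) : S = Icc (y + 1) (y + x) := by
  obtain ⟨⟨hpre, hlt, hmem⟩, hcorner⟩ := hC
  simp only [Bool.false_eq_true, if_false] at hmem
  set q := x + y
  have hsub : S ⊆ Icc 1 q :=
    inter_eq_left.1 (eq_of_subset_of_card_le inter_subset_left (by omega))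
  have hq : 1 ≤ q ∧ q ∈ S := by
    rcases hcorner with ⟨h1, h2⟩ | ⟨h1, h2⟩
    · exact ⟨by omega, by tauto⟩
    · have : q + 2 ∉ S := fun h => by have := mem_Icc.1 (hsub h); omega
      tauto
  obtain ⟨c, hcq, hcS⟩ := exists_mem_iff_of_subsingleton_corners
    (subsingleton_corners_of_cornersF_le_two hc (mem_Icc.2 ⟨hq.1, by omega⟩)
      fun h => hmem (h.1 hq.2))
  have hS : S = Icc (c + 1) q := by
    ext t
    rw [mem_Icc]
    constructor
    · intro ht
      have hct := (hcS t (hsub ht)).1 ht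
      simp only [hq.2, iff_true] at hct
      have := mem_Icc.1 (hsub ht)
      omega
    · rintro ⟨hct, htq⟩
      exact (hcS t (mem_Icc.2 ⟨by omega, htq⟩)).2 (by simp only [hq.2, iff_true]; omega)
  rw [hS, Nat.card_Icc] at hcard
  rw [hS]
  congr 1 <;> omega

theorem card_le_card_inter_Icc_add {n : ℕ} {S : Finset ℕ} (hS : S ⊆ Icc 1 n) (q : ℕ) :
    #S ≤ #(S ∩ Icc 1 q) + (n - q) := by
  have hsplit := card_sdiff_add_card_inter S (Icc 1 q)
  have hsuffix : #(S \ Icc 1 q) ≤ #(Icc (q + 1) n) := card_le_card fun t ht => by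
    have := hS (mem_sdiff.1 ht).1
    simp only [mem_sdiff, mem_Icc] at ht this ⊢
    omega
  rw [Nat.card_Icc] at hsuffix
  omega

section Ladder

variable {k n : ℕ} {ν : ℕ → ℕ}

theorem bounds_of_mem_Icc (hν : StrictMonoOn ν (Set.Iic (k + 1))) (hνn : ν (k + 1) = n)
    {l : ℕ} (hl : l ∈ Icc 1 k) : ν (l - 1) < ν l ∧ ν l < ν (l + 1) ∧ ν (l + 1) ≤ n := by
  rw [mem_Icc] at hl
  exact ⟨hν (Set.mem_Iic.2 (by omega)) (Set.mem_Iic.2 (by omega)) (by omega),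
    hν (Set.mem_Iic.2 (by omega)) (Set.mem_Iic.2 (by omega)) (by omega),
    hνn ▸ hν.monotoneOn (Set.mem_Iic.2 (by omega)) (Set.mem_Iic.2 le_rfl) (by omega)⟩

theorem card_eq_of_edgeOnF_true (hν : StrictMonoOn ν (Set.Iic (k + 1))) (hνn : ν (k + 1) = n)
    {l x : ℕ} {S : Finset ℕ} (hl : l ∈ Icc 1 k) (hx : ν (l - 1) ≤ x) (hS : PosPath k n ν S)
    (hE : edgeOnF n S true x (n - ν l)) : #S = ν l := by
  obtain ⟨hSn, j, hj1, hjk, hSj⟩ := hS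
  obtain ⟨hpre, -, hmem⟩ := hE
  simp only [if_true] at hmem
  obtain ⟨-, -, hln⟩ := bounds_of_mem_Icc hν hνn hl
  have hlow : x + 1 ≤ #S := calc
    x + 1 = #(insert (x + (n - ν l) + 1) (S ∩ Icc 1 (x + (n - ν l)))) := by
      rw [card_insert_of_notMem (by simp), hpre]
    _ ≤ #S := card_le_card (insert_subset hmem inter_subset_left)
  have hup := card_le_card_inter_Icc_add hSn (x + (n - ν l))
  rw [mem_Icc] at hl
  have h1 := (hν.lt_iff_lt (Set.mem_Iic.2 (by omega)) (Set.mem_Iic.2 (by omega))).1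
    (show ν (l - 1) < ν j by omega)
  have h2 := (hν.le_iff_le (Set.mem_Iic.2 (by omega)) (Set.mem_Iic.2 (by omega))).1
    (show ν j ≤ ν l by omega)
  rw [hSj, show j = l by omega]

theorem card_eq_of_edgeOnF_false (hν : StrictMonoOn ν (Set.Iic (k + 1)))
    {l y : ℕ} {S : Finset ℕ} (hl : l ∈ Icc 1 k) (hy : n ≤ y + ν (l + 1)) (hS : PosPath k n ν S)
    (hE : edgeOnF n S false (ν l) y) : #S = ν l := by
  obtain ⟨hSn, j, hj1, hjk, hSj⟩ := hS
  obtain ⟨hpre, hlt, hmem⟩ := hE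
  simp only [Bool.false_eq_true, if_false] at hmem
  have hlow : ν l ≤ #S := hpre ▸ card_le_card inter_subset_left
  have hup := card_le_card_inter_Icc_add hSn (ν l + y + 1)
  rw [← insert_Icc_right_eq_Icc_add_one (by omega), inter_insert_of_notMem hmem, hpre] at hup
  rw [mem_Icc] at hl
  have h1 := (hν.le_iff_le (Set.mem_Iic.2 (by omega)) (Set.mem_Iic.2 (by omega))).1
    (show ν l ≤ ν j by omega)
  have h2 := (hν.lt_iff_lt (Set.mem_Iic.2 (by omega)) (Set.mem_Iic.2 (by omega))).1
    (show ν j < ν (l + 1) by omega)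
  rw [hSj, show j = l by omega]

/-- The roof edges adjacent to the corner `O_l`: the horizontal ones ending at `O_l` and the
vertical ones starting there. -/
def roofBlock (n : ℕ) (ν : ℕ → ℕ) (l : ℕ) : Finset (Bool × ℕ × ℕ) :=
  (Ico (ν (l - 1)) (ν l)).image (fun x => (true, x, n - ν l)) ∪
    (Ico (n - ν (l + 1)) (n - ν l)).image (fun y => (false, ν l, y))

theorem mem_roofBlock {l : ℕ} (hl : ν l ≤ n) {h : Bool} {x y : ℕ} :
    (h, x, y) ∈ roofBlock n ν l ↔
      (h = true ∧ y + ν l = n ∧ ν (l - 1) ≤ x ∧ x < ν l) ∨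
        (h = false ∧ x = ν l ∧ n ≤ y + ν (l + 1) ∧ y + ν l < n) := by
  cases h <;> simp [roofBlock] <;> omega

theorem roofEdge_iff (hν : StrictMonoOn ν (Set.Iic (k + 1))) (hνn : ν (k + 1) = n)
    {h : Bool} {x y : ℕ} :
    RoofEdge k n ν h x y ↔ ∃ l ∈ Icc 1 k, (h, x, y) ∈ roofBlock n ν l := by
  constructor
  · intro hR
    cases h
    all_goals
      obtain ⟨l, hl1, hlk, hR⟩ := hR
      have hl : l ∈ Icc 1 k := mem_Icc.2 ⟨hl1, hlk⟩
      have := bounds_of_mem_Icc hν hνn hl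
      exact ⟨l, hl, (mem_roofBlock (by omega)).2 (by simp [hR])⟩
  · rintro ⟨l, hl, he⟩
    have := bounds_of_mem_Icc hν hνn hl
    rw [mem_Icc] at hl
    rcases (mem_roofBlock (by omega)).1 he with ⟨rfl, hR⟩ | ⟨rfl, hR⟩
    exacts [⟨l, hl.1, hl.2, hR⟩, ⟨l, hl.1, hl.2, hR⟩]

theorem card_roofBlock (hν : StrictMonoOn ν (Set.Iic (k + 1))) (hνn : ν (k + 1) = n) {l : ℕ}
    (hl : l ∈ Icc 1 k) : #(roofBlock n ν l) = ν (l + 1) - ν (l - 1) := by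
  obtain ⟨h1, h2, h3⟩ := bounds_of_mem_Icc hν hνn hl
  rw [roofBlock, card_union_of_disjoint (disjoint_left.2 (by simp)),
    card_image_of_injective _ (fun a b hab => by simpa using hab),
    card_image_of_injective _ (fun a b hab => by simpa using hab), Nat.card_Ico, Nat.card_Ico]
  omega

theorem pairwiseDisjoint_roofBlock (hν : StrictMonoOn ν (Set.Iic (k + 1)))
    (hνn : ν (k + 1) = n) : (Icc 1 k : Set ℕ).PairwiseDisjoint (roofBlock n ν) := by
  intro l hl l' hl' hne
  rw [Function.onFun, disjoint_left]
  rintro ⟨h, x, y⟩ he he'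
  rw [mem_coe] at hl hl'
  have := bounds_of_mem_Icc hν hνn hl
  have := bounds_of_mem_Icc hν hνn hl'
  rw [mem_roofBlock (by omega)] at he he'
  rw [mem_Icc] at hl hl'
  refine hne (hν.injOn (Set.mem_Iic.2 (by omega)) (Set.mem_Iic.2 (by omega)) ?_)
  cases h <;> simp only [Bool.false_eq_true, Bool.true_eq_false, false_and, true_and, false_or,
    or_false] at he he' <;> omega

/-- The special path of a roof edge: right, up, right through a horizontal edge `(x, y)`;
up, right, up through a vertical one. -/
def specialPath (n : ℕ) : Bool → ℕ → ℕ → Finset ℕ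
  | true, x, y => Icc 1 x ∪ Icc (x + y + 1) n
  | false, x, y => Icc (y + 1) (y + x)

theorem specialPath_spec (hν : StrictMonoOn ν (Set.Iic (k + 1))) (hνn : ν (k + 1) = n)
    {l : ℕ} (hl : l ∈ Icc 1 k) {h : Bool} {x y : ℕ} (he : (h, x, y) ∈ roofBlock n ν l) :
    specialPath n h x y ⊆ Icc 1 n ∧ #(specialPath n h x y) = ν l ∧
      hasCornerAt n (specialPath n h x y) h x y ∧ cornersF n (specialPath n h x y) ≤ 2 := by
  obtain ⟨h1, h2, h3⟩ := bounds_of_mem_Icc hν hνn hl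
  rcases (mem_roofBlock (by omega)).1 he with ⟨rfl, hR⟩ | ⟨rfl, hR⟩
  · have hpre : specialPath n true x y ∩ Icc 1 (x + y) = Icc 1 x := by
      ext t
      simp only [specialPath, mem_inter, mem_union, mem_Icc]
      omega
    have hdisj : Disjoint (Icc 1 x) (Icc (x + y + 1) n) :=
      disjoint_left.2 fun t ht ht' => by simp only [mem_Icc] at ht ht'; omega
    refine ⟨fun t ht => ?_, ?_, ⟨⟨?_, by omega, ?_⟩, ?_⟩,
      cornersF_le_two x (x + y) fun t htn ht => ?_⟩
    · simp only [specialPath, mem_union, mem_Icc] at ht ⊢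
      omega
    · rw [specialPath, card_union_of_disjoint hdisj, Nat.card_Icc, Nat.card_Icc]
      omega
    · rw [hpre, Nat.card_Icc]
      omega
    · simp only [specialPath, if_true, mem_union, mem_Icc]
      omega
    · left
      simp only [specialPath, mem_union, mem_Icc]
      omega
    · simp only [specialPath, IsCornerAfter, mem_union, mem_Icc] at htn ht
      by_contra! hne
      exact ht ⟨fun h => by omega, fun h => by omega⟩
  · have hpre : specialPath n false x y ∩ Icc 1 (x + y) = specialPath n false x y := by
      ext t
      simp only [specialPath, mem_inter, mem_Icc]
      omega
    refine ⟨fun t ht => ?_, ?_, ⟨⟨?_, by omega, ?_⟩, ?_⟩,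
      cornersF_le_two y (y + x) fun t htn ht => ?_⟩
    · simp only [specialPath, mem_Icc] at ht ⊢
      omega
    · rw [specialPath, Nat.card_Icc]
      omega
    · rw [hpre, specialPath, Nat.card_Icc]
      omega
    · simp only [specialPath, Bool.false_eq_true, if_false, mem_Icc]
      omega
    · left
      simp only [specialPath, mem_Icc]
      omega
    · simp only [specialPath, IsCornerAfter, mem_Icc] at htn ht
      by_contra! hne
      exact ht ⟨fun h => by omega, fun h => by omega⟩

theorem eq_specialPath (hν : StrictMonoOn ν (Set.Iic (k + 1))) (hνn : ν (k + 1) = n)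
    {l : ℕ} (hl : l ∈ Icc 1 k) {h : Bool} {x y : ℕ} (he : (h, x, y) ∈ roofBlock n ν l)
    {S : Finset ℕ} (hS : PosPath k n ν S) (hC : hasCornerAt n S h x y)
    (hc : cornersF n S ≤ 2) : S = specialPath n h x y := by
  obtain ⟨h1, h2, h3⟩ := bounds_of_mem_Icc hν hνn hl
  rcases (mem_roofBlock (by omega)).1 he with ⟨rfl, hy, hx1, hx2⟩ | ⟨rfl, rfl, hy1, hy2⟩
  · obtain rfl : y = n - ν l := by omega
    have hcard := card_eq_of_edgeOnF_true hν hνn hl hx1 hS hC.1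
    exact eq_Icc_union_Icc_of_hasCornerAt hS.1 (by omega) hC hc
  · exact eq_Icc_of_hasCornerAt (card_eq_of_edgeOnF_false hν hl hy1 hS hC.1) hC hc

theorem minimizes_cornersF_iff_eq_specialPath (hν : StrictMonoOn ν (Set.Iic (k + 1)))
    (hνn : ν (k + 1) = n) {l : ℕ} (hl : l ∈ Icc 1 k) {h : Bool} {x y : ℕ}
    (he : (h, x, y) ∈ roofBlock n ν l) (S : Finset ℕ) :
    (PosPath k n ν S ∧ hasCornerAt n S h x y ∧
        ∀ S', PosPath k n ν S' → hasCornerAt n S' h x y → cornersF n S ≤ cornersF n S') ↔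
      S = specialPath n h x y := by
  obtain ⟨hsub, hcard, hC, hc⟩ := specialPath_spec hν hνn hl he
  have hP : PosPath k n ν (specialPath n h x y) :=
    ⟨hsub, l, (mem_Icc.1 hl).1, (mem_Icc.1 hl).2, hcard⟩
  constructor
  · rintro ⟨hS, hCS, hmin⟩
    exact eq_specialPath hν hνn hl he hS hCS ((hmin _ hP hC).trans hc)
  · rintro rfl
    refine ⟨hP, hC, fun S' hS' hC' => ?_⟩
    by_contra! hlt
    rw [eq_specialPath hν hνn hl he hS' hC' (by omega)] at hlt
    exact lt_irrefl _ hlt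

theorem isSpecialPath_iff (hν : StrictMonoOn ν (Set.Iic (k + 1))) (hνn : ν (k + 1) = n)
    (S : Finset ℕ) :
    IsSpecialPath k n ν S ↔
      ∃ l ∈ Icc 1 k, ∃ e ∈ roofBlock n ν l, S = specialPath n e.1 e.2.1 e.2.2 := by
  constructor
  · rintro ⟨hS, h, x, y, hR, hC, hmin⟩
    obtain ⟨l, hl, he⟩ := (roofEdge_iff hν hνn).1 hR
    exact ⟨l, hl, (h, x, y), he,
      (minimizes_cornersF_iff_eq_specialPath hν hνn hl he S).1 ⟨hS, hC, hmin⟩⟩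
  · rintro ⟨l, hl, ⟨h, x, y⟩, he, hSe⟩
    obtain ⟨hS, hC, hmin⟩ := (minimizes_cornersF_iff_eq_specialPath hν hνn hl he S).2 hSe
    exact ⟨hS, h, x, y, (roofEdge_iff hν hνn).2 ⟨l, hl, he⟩, hC, hmin⟩

theorem isSpecialPath_and_card_eq_iff (hν : StrictMonoOn ν (Set.Iic (k + 1)))
    (hνn : ν (k + 1) = n) {i : ℕ} (hi : i ∈ Icc 1 k) (S : Finset ℕ) :
    (S ⊆ Icc 1 n ∧ #S = ν i ∧ IsSpecialPath k n ν S) ↔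
      S ∈ (roofBlock n ν i).image fun e => specialPath n e.1 e.2.1 e.2.2 := by
  rw [mem_image]
  constructor
  · rintro ⟨-, hcard, hS⟩
    obtain ⟨l, hl, e, he, rfl⟩ := (isSpecialPath_iff hν hνn S).1 hS
    obtain ⟨-, hcardl, -⟩ := specialPath_spec hν hνn hl he
    rw [mem_Icc] at hi hl
    obtain rfl : i = l := hν.injOn (Set.mem_Iic.2 (by omega)) (Set.mem_Iic.2 (by omega))
      (hcard.symm.trans hcardl)
    exact ⟨e, he, rfl⟩
  · rintro ⟨e, he, rfl⟩
    obtain ⟨hsub, hcard, -⟩ := specialPath_spec hν hνn hi he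
    exact ⟨hsub, hcard, (isSpecialPath_iff hν hνn _).2 ⟨i, hi, e, he, rfl⟩⟩

theorem injOn_specialPath (hν : StrictMonoOn ν (Set.Iic (k + 1))) (hνn : ν (k + 1) = n)
    {i : ℕ} (hi : i ∈ Icc 1 k) :
    Set.InjOn (fun e : Bool × ℕ × ℕ => specialPath n e.1 e.2.1 e.2.2) (roofBlock n ν i) := by
  rintro ⟨h, x, y⟩ he ⟨h', x', y'⟩ he' heq
  obtain ⟨h1, h2, h3⟩ := bounds_of_mem_Icc hν hνn hi
  rw [mem_coe, mem_roofBlock (by omega)] at he he'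
  -- Only paths ending with a horizontal step contain `n`; two paths of the same shape
  -- first differ at step `min x x' + 1`, resp. `min y y' + 1`.
  have hn := congrArg (n ∈ ·) heq
  have hx := congrArg (min x x' + 1 ∈ ·) heq
  have hy := congrArg (min y y' + 1 ∈ ·) heq
  rcases he with ⟨rfl, he⟩ | ⟨rfl, he⟩ <;> rcases he' with ⟨rfl, he'⟩ | ⟨rfl, he'⟩ <;>
    simp [specialPath] at hn hx hy ⊢ <;> omega

end Ladder

theorem roof_edges_and_special_paths_general (k n : ℕ) (ν : ℕ → ℕ)
    (hνtop : ν (k + 1) = n) (hmono : ∀ i ≤ k, ν i < ν (i + 1)) :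
    Nat.card {e : Bool × ℕ × ℕ // RoofEdge k n ν e.1 e.2.1 e.2.2} =
      ∑ i ∈ Finset.Icc 1 k, (ν (i + 1) - ν (i - 1)) ∧
    ∀ i, 1 ≤ i → i ≤ k →
      Nat.card {S : Finset ℕ //
          S ⊆ Finset.Icc 1 n ∧ S.card = ν i ∧ IsSpecialPath k n ν S} =
        ν (i + 1) - ν (i - 1) := by
  have hν : StrictMonoOn ν (Set.Iic (k + 1)) :=
    strictMonoOn_Iic_of_lt_succ fun i hi => by simpa using hmono i (by omega)
  refine ⟨?_, fun i hi1 hik => ?_⟩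
  · calc Nat.card {e : Bool × ℕ × ℕ // RoofEdge k n ν e.1 e.2.1 e.2.2}
        = #((Icc 1 k).biUnion (roofBlock n ν)) := by
          rw [← Nat.card_eq_finsetCard]
          exact Nat.card_congr (Equiv.subtypeEquivRight fun e => by
            simp [roofEdge_iff hν hνtop])
      _ = ∑ i ∈ Icc 1 k, (ν (i + 1) - ν (i - 1)) := by
          rw [card_biUnion (pairwiseDisjoint_roofBlock hν hνtop)]
          exact sum_congr rfl fun l hl => card_roofBlock hν hνtop hl
  · have hi : i ∈ Icc 1 k := mem_Icc.2 ⟨hi1, hik⟩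
    calc Nat.card {S : Finset ℕ // S ⊆ Icc 1 n ∧ #S = ν i ∧ IsSpecialPath k n ν S}
        = #((roofBlock n ν i).image fun e => specialPath n e.1 e.2.1 e.2.2) := by
          rw [← Nat.card_eq_finsetCard]
          exact Nat.card_congr
            (Equiv.subtypeEquivRight (isSpecialPath_and_card_eq_iff hν hνtop hi))
      _ = #(roofBlock n ν i) := card_image_of_injOn (injOn_specialPath hν hνtop hi)
      _ = ν (i + 1) - ν (i - 1) := card_roofBlock hν hνtop hi

/-- The number of edges on the roof of `Λ(n_1,…,n_k;n)` equals
`Σ_{i=1}^{k} (n_{i+1} − n_{i−1})`, and for each `1 ≤ i ≤ k` there are exactly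
`n_{i+1} − n_{i−1}` special paths ending at the corner `O_i` (i.e. with `ν i` horizontal
steps). -/
theorem roof_edges_and_special_paths (k n : ℕ) (ν : ℕ → ℕ) (hν0 : ν 0 = 0)
    (hνtop : ν (k + 1) = n) (hmono : ∀ i ≤ k, ν i < ν (i + 1)) :
    Nat.card {e : Bool × ℕ × ℕ // RoofEdge k n ν e.1 e.2.1 e.2.2} =
      ∑ i ∈ Finset.Icc 1 k, (ν (i + 1) - ν (i - 1)) ∧
    ∀ i, 1 ≤ i → i ≤ k →
      Nat.card {S : Finset ℕ //
          S ⊆ Finset.Icc 1 n ∧ S.card = ν i ∧ IsSpecialPath k n ν S} =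
        ν (i + 1) - ν (i - 1) :=
  roof_edges_and_special_paths_general k n ν hνtop hmono
end

section
/- For the Grassmannian Gr(m,n), the special paths correspond exactly to the partitions in the m × (n−m) rectangle that are rectangles of full height m or full width n−m (extremal rectangles) together with the zero partition, namely the partitions (j, j, ..., j) (m copies) for 0 ≤ j ≤ n−m and (n−m,...,n−m, 0,...,0) with r copies of n−m for 1 ≤ r ≤ m; in total there are n such paths, matching −K_{Gr(m,n)} = n σ^{s_m}. -/
namespace SPaux
open Finset

lemma change_down {S : Finset ℕ} {a b : ℕ} (ha : a ∈ S) (hb : b ∉ S) (hab : a < b) :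
    ∃ t, a ≤ t ∧ t < b ∧ t ∈ S ∧ t + 1 ∉ S := by
  by_contra h
  push_neg at h
  have key : ∀ k, a + k ≤ b → a + k ∈ S := by
    intro k
    induction k with
    | zero => intro _; exact ha
    | succ k ih =>
        intro hk
        have h1 : a + k ∈ S := ih (by omega)
        exact h (a + k) (by omega) (by omega) h1
  have hb' : a + (b - a) ∈ S := key (b - a) (by omega)
  have e : a + (b - a) = b := by omega
  rw [e] at hb'
  exact hb hb'

lemma change_up {S : Finset ℕ} {a b : ℕ} (ha : a ∉ S) (hb : b ∈ S) (hab : a < b) :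
    ∃ t, a ≤ t ∧ t < b ∧ t ∉ S ∧ t + 1 ∈ S := by
  by_contra h
  push_neg at h
  have key : ∀ k, a + k ≤ b → a + k ∉ S := by
    intro k
    induction k with
    | zero => intro _; exact ha
    | succ k ih =>
        intro hk
        have h1 : a + k ∉ S := ih (by omega)
        exact h (a + k) (by omega) (by omega) h1
  have hb' : a + (b - a) ∉ S := key (b - a) (by omega)
  have e : a + (b - a) = b := by omega
  rw [e] at hb'
  exact hb' hb

lemma mem_cornerSet {n : ℕ} {S : Finset ℕ} {t : ℕ} (h1 : 1 ≤ t) (h2 : t + 1 ≤ n)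
    (h3 : ¬(t ∈ S ↔ t + 1 ∈ S)) :
    t ∈ (Finset.Icc 1 (n - 1)).filter fun t => ¬(t ∈ S ↔ t + 1 ∈ S) := by
  simp only [mem_filter, mem_Icc]
  exact ⟨⟨h1, by omega⟩, h3⟩

lemma two_le_corners {n : ℕ} {S : Finset ℕ} {t1 t2 : ℕ}
    (h1 : 1 ≤ t1) (h2 : t1 + 1 ≤ n) (h3 : ¬(t1 ∈ S ↔ t1 + 1 ∈ S))
    (h4 : 1 ≤ t2) (h5 : t2 + 1 ≤ n) (h6 : ¬(t2 ∈ S ↔ t2 + 1 ∈ S))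
    (hne : t1 ≠ t2) : 2 ≤ cornersF n S := by
  have hsub : ({t1, t2} : Finset ℕ) ⊆ (Finset.Icc 1 (n - 1)).filter fun t => ¬(t ∈ S ↔ t + 1 ∈ S) := by
    intro t ht
    simp only [mem_insert, mem_singleton] at ht
    rcases ht with rfl | rfl
    · exact mem_cornerSet h1 h2 h3
    · exact mem_cornerSet h4 h5 h6
  have := Finset.card_le_card hsub
  rwa [Finset.card_pair hne] at this

lemma three_le_corners {n : ℕ} {S : Finset ℕ} {t1 t2 t3 : ℕ}
    (h1 : 1 ≤ t1) (h2 : t1 + 1 ≤ n) (h3 : ¬(t1 ∈ S ↔ t1 + 1 ∈ S))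
    (h4 : 1 ≤ t2) (h5 : t2 + 1 ≤ n) (h6 : ¬(t2 ∈ S ↔ t2 + 1 ∈ S))
    (h7 : 1 ≤ t3) (h8 : t3 + 1 ≤ n) (h9 : ¬(t3 ∈ S ↔ t3 + 1 ∈ S))
    (h12 : t1 < t2) (h23 : t2 < t3) : 3 ≤ cornersF n S := by
  have hsub : ({t1, t2, t3} : Finset ℕ) ⊆ (Finset.Icc 1 (n - 1)).filter fun t => ¬(t ∈ S ↔ t + 1 ∈ S) := by
    intro t ht
    simp only [mem_insert, mem_singleton] at ht
    rcases ht with rfl | rfl | rfl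
    · exact mem_cornerSet h1 h2 h3
    · exact mem_cornerSet h4 h5 h6
    · exact mem_cornerSet h7 h8 h9
  have hc : ({t1, t2, t3} : Finset ℕ).card = 3 := by
    rw [Finset.card_insert_of_notMem (by simp; omega), Finset.card_pair (by omega)]
  have := Finset.card_le_card hsub
  rw [hc] at this
  exact this

lemma corners_le_two {n : ℕ} {S : Finset ℕ} {a b : ℕ}
    (h : ∀ t, 1 ≤ t → t + 1 ≤ n → ¬(t ∈ S ↔ t + 1 ∈ S) → t = a ∨ t = b) :
    cornersF n S ≤ 2 := by
  have hsub : ((Finset.Icc 1 (n - 1)).filter fun t => ¬(t ∈ S ↔ t + 1 ∈ S)) ⊆ {a, b} := by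
    intro t ht
    simp only [mem_filter, mem_Icc] at ht
    have := h t ht.1.1 (by omega) ht.2
    simp only [mem_insert, mem_singleton]
    tauto
  calc cornersF n S ≤ ({a, b} : Finset ℕ).card := Finset.card_le_card hsub
    _ ≤ 2 := by
        apply le_trans (Finset.card_insert_le _ _)
        simp

lemma split_card {n c : ℕ} {S : Finset ℕ} (hsub : S ⊆ Icc 1 n) :
    (S ∩ Icc 1 c).card + (S ∩ Icc (c + 1) n).card = S.card := by
  rw [← Finset.card_union_of_disjoint]
  · congr 1
    ext t
    simp only [mem_union, mem_inter, mem_Icc]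
    constructor
    · rintro (⟨h, _⟩ | ⟨h, _⟩) <;> exact h
    · intro ht
      have := hsub ht
      simp only [mem_Icc] at this
      by_cases hc : t ≤ c
      · exact Or.inl ⟨ht, this.1, hc⟩
      · exact Or.inr ⟨ht, by omega, this.2⟩
  · rw [Finset.disjoint_left]
    intro t ht ht'
    simp only [mem_inter, mem_Icc] at ht ht'
    omega

section Struct
variable {n m : ℕ}

lemma pospath_iff {ν : ℕ → ℕ} (hν1 : ν 1 = m) (S : Finset ℕ) :
    PosPath 1 n ν S ↔ S ⊆ Icc 1 n ∧ S.card = m := by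
  constructor
  · rintro ⟨h1, j, hj1, hj2, hj3⟩
    have hj : j = 1 := by omega
    subst hj
    exact ⟨h1, by rw [hj3, hν1]⟩
  · rintro ⟨h1, h2⟩
    exact ⟨h1, 1, le_refl _, le_refl _, by rw [h2, hν1]⟩

lemma horiz_struct (hmn : m < n) {S : Finset ℕ} {x : ℕ}
    (hsub : S ⊆ Icc 1 n) (hcard : S.card = m)
    (hc : hasCornerAt n S true x (n - m)) :
    x < m ∧ Icc (x + (n - m) + 1) n ⊆ S ∧ (S ∩ Icc 1 (x + (n - m))).card = x ∧
      x + (n - m) ∉ S := by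
  obtain ⟨⟨hxc, hlt, hmem⟩, hopt⟩ := hc
  have hmem' : x + (n - m) + 1 ∈ S := by simpa using hmem
  have hxm : x < m := by omega
  have hsplit := split_card (c := x + (n - m)) hsub
  have hcard2 : (S ∩ Icc (x + (n - m) + 1) n).card = m - x := by omega
  have hIcc : (Icc (x + (n - m) + 1) n).card = m - x := by rw [Nat.card_Icc]; omega
  have heq : S ∩ Icc (x + (n - m) + 1) n = Icc (x + (n - m) + 1) n :=
    Finset.eq_of_subset_of_card_le Finset.inter_subset_right (by omega)
  have hup : Icc (x + (n - m) + 1) n ⊆ S := by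
    rw [← heq]; exact Finset.inter_subset_left
  have hnot : x + (n - m) ∉ S := by
    rcases hopt with ⟨_, h⟩ | ⟨h2, h⟩
    · intro hcon; exact h (iff_of_true hcon hmem')
    · exfalso
      exact h (iff_of_true hmem' (hup (by simp only [mem_Icc]; omega)))
  exact ⟨hxm, hup, hxc, hnot⟩

lemma vert_struct (hm : 0 < m) {S : Finset ℕ} {y : ℕ}
    (hsub : S ⊆ Icc 1 n) (hcard : S.card = m)
    (hc : hasCornerAt n S false m y) :
    y < n - m ∧ S ⊆ Icc 1 (m + y) ∧ m + y ∈ S := by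
  obtain ⟨⟨hxc, hlt, hmem⟩, hopt⟩ := hc
  have hmem' : m + y + 1 ∉ S := by simpa using hmem
  have hy : y < n - m := by omega
  have hsplit := split_card (c := m + y) hsub
  have h0 : (S ∩ Icc (m + y + 1) n).card = 0 := by omega
  rw [Finset.card_eq_zero] at h0
  have hsub2 : S ⊆ Icc 1 (m + y) := by
    intro t ht
    have h1 := hsub ht
    simp only [mem_Icc] at h1 ⊢
    by_contra hcon
    have hmm : t ∈ S ∩ Icc (m + y + 1) n := by
      simp only [mem_inter, mem_Icc]; exact ⟨ht, by omega, h1.2⟩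
    rw [h0] at hmm
    simp at hmm
  have hmem2 : m + y ∈ S := by
    rcases hopt with ⟨_, h⟩ | ⟨h2, h⟩
    · by_contra hcon; exact h (iff_of_false hcon hmem')
    · exfalso
      refine h (iff_of_false hmem' fun h' => ?_)
      have := hsub2 h'
      simp only [mem_Icc] at this
      omega
  exact ⟨hy, hsub2, hmem2⟩

lemma horiz_lower (hmn : m < n) {S : Finset ℕ} {x : ℕ} (hx0 : 1 ≤ x) (hxm : x < m)
    (hup : x + (n - m) + 1 ∈ S) (hxc : (S ∩ Icc 1 (x + (n - m))).card = x)
    (hnot : x + (n - m) ∉ S) : 2 ≤ cornersF n S := by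
  have hne : (S ∩ Icc 1 (x + (n - m))).Nonempty := by
    rw [← Finset.card_pos, hxc]; omega
  obtain ⟨a, ha⟩ := hne
  simp only [mem_inter, mem_Icc] at ha
  have haS : a ∈ S := ha.1
  have halt : a < x + (n - m) := by
    rcases Nat.lt_or_ge a (x + (n - m)) with h | h
    · exact h
    · exfalso; have : a = x + (n - m) := by omega
      rw [this] at haS; exact hnot haS
  obtain ⟨t1, ht1a, ht1b, ht1S, ht1S'⟩ := change_down haS hnot halt
  have ha1 : 1 ≤ a := ha.2.1
  exact two_le_corners (by omega) (by omega) (fun h => ht1S' (h.mp ht1S))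
    (by omega) (by omega) (fun h => hnot (h.mpr hup)) (by omega)

lemma vert_lower (hmn : m < n) {S : Finset ℕ} {y : ℕ} (hy0 : 1 ≤ y) (hyd : y < n - m)
    (hsub : S ⊆ Icc 1 (m + y)) (hcard : S.card = m) (hmem : m + y ∈ S) :
    2 ≤ cornersF n S := by
  have hT : (Icc 1 (m + y) \ S).Nonempty := by
    rw [← Finset.card_pos, Finset.card_sdiff_of_subset hsub, hcard, Nat.card_Icc]
    omega
  obtain ⟨a, ha⟩ := hT
  simp only [mem_sdiff, mem_Icc] at ha
  have halt : a < m + y := by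
    rcases Nat.lt_or_ge a (m + y) with h | h
    · exact h
    · exfalso; have : a = m + y := by omega
      rw [this] at ha; exact ha.2 hmem
  obtain ⟨t1, ht1a, ht1b, ht1S, ht1S'⟩ := change_up ha.2 hmem halt
  have hnotup : m + y + 1 ∉ S := fun h => by
    have := hsub h; simp only [mem_Icc] at this; omega
  have ha1 : 1 ≤ a := ha.1.1
  exact two_le_corners (by omega) (by omega) (fun h => ht1S (h.mpr ht1S'))
    (by omega) (by omega) (fun h => hnotup (h.mp hmem)) (by omega)

lemma horiz_exact (hmn : m < n) {S : Finset ℕ} {x : ℕ} (hx0 : 1 ≤ x) (hxm : x < m)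
    (hsub : S ⊆ Icc 1 n) (hcard : S.card = m)
    (hup : Icc (x + (n - m) + 1) n ⊆ S)
    (hxc : (S ∩ Icc 1 (x + (n - m))).card = x)
    (hnot : x + (n - m) ∉ S)
    (hcor : cornersF n S ≤ 2) :
    S = Icc 1 x ∪ Icc (x + (n - m) + 1) n := by
  have hupmem : x + (n - m) + 1 ∈ S := hup (by simp only [mem_Icc]; omega)
  have hlow : Icc 1 x ⊆ S := by
    intro a ha
    simp only [mem_Icc] at ha
    by_contra haS
    -- find b ∈ S ∩ Icc 1 (x + (n-m)) with b > a
    have hbex : ∃ b, b ∈ S ∧ a < b ∧ b < x + (n - m) := by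
      by_contra hb
      push_neg at hb
      have hss : S ∩ Icc 1 (x + (n - m)) ⊆ Icc 1 (a - 1) := by
        intro t ht
        simp only [mem_inter, mem_Icc] at ht
        simp only [mem_Icc]
        refine ⟨ht.2.1, ?_⟩
        by_contra hta
        have h1 : a < t := by
          rcases Nat.lt_or_ge a t with h | h
          · exact h
          · exfalso
            have : t = a := by omega
            rw [this] at ht; exact haS ht.1
        have h2 := hb t ht.1 h1
        have : t = x + (n - m) := by omega
        rw [this] at ht
        exact hnot ht.1
      have := Finset.card_le_card hss
      rw [hxc, Nat.card_Icc] at this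
      omega
    obtain ⟨b, hbS, hab, hbx⟩ := hbex
    obtain ⟨t1, ht1a, ht1b, ht1S, ht1S'⟩ := change_up haS hbS hab
    obtain ⟨t2, ht2a, ht2b, ht2S, ht2S'⟩ := change_down hbS hnot hbx
    have h3 := three_le_corners (n := n) (S := S) (t1 := t1) (t2 := t2) (t3 := x + (n - m))
      (by omega) (by omega) (fun h => ht1S (h.mpr ht1S'))
      (by omega) (by omega) (fun h => ht2S' (h.mp ht2S))
      (by omega) (by omega) (fun h => hnot (h.mpr hupmem))
      (by omega) (by omega)
    omega
  -- now conclude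
  have hinter : S ∩ Icc 1 (x + (n - m)) = Icc 1 x := by
    refine (Finset.eq_of_subset_of_card_le ?_ ?_).symm
    · intro t ht
      simp only [mem_Icc] at ht
      simp only [mem_inter, mem_Icc]
      exact ⟨hlow (by simp only [mem_Icc]; exact ht), ht.1, by omega⟩
    · rw [hxc, Nat.card_Icc]; omega
  ext t
  simp only [mem_union, mem_Icc]
  constructor
  · intro ht
    have hb := hsub ht
    simp only [mem_Icc] at hb
    by_cases hc : t ≤ x + (n - m)
    · have : t ∈ S ∩ Icc 1 (x + (n - m)) := by
        simp only [mem_inter, mem_Icc]; exact ⟨ht, hb.1, hc⟩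
      rw [hinter] at this
      simp only [mem_Icc] at this
      exact Or.inl this
    · exact Or.inr ⟨by omega, hb.2⟩
  · rintro (h | h)
    · exact hlow (by simp only [mem_Icc]; exact h)
    · exact hup (by simp only [mem_Icc]; exact h)

lemma vert_exact (hm : 0 < m) (hmn : m < n) {S : Finset ℕ} {y : ℕ} (hy0 : 1 ≤ y)
    (hcard : S.card = m) (hsub : S ⊆ Icc 1 (m + y)) (hsub1 : S ⊆ Icc 1 n)
    (hyd : y < n - m) (hmem : m + y ∈ S)
    (hcor : cornersF n S ≤ 2) :
    S = Icc (y + 1) (y + m) := by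
  have hnotup : m + y + 1 ∉ S := fun h => by
    have := hsub h; simp only [mem_Icc] at this; omega
  have hlow : Icc (y + 1) (y + m) ⊆ S := by
    intro a ha
    simp only [mem_Icc] at ha
    by_contra haS
    have halt : a < m + y := by
      rcases Nat.lt_or_ge a (m + y) with h | h
      · exact h
      · exfalso; have : a = m + y := by omega
        rw [this] at haS; exact haS hmem
    have hbex : ∃ b, b ∈ S ∧ b < a := by
      by_contra hb
      push_neg at hb
      have hss : S ⊆ Icc (a + 1) (m + y) := by
        intro t ht
        have h1 := hsub ht
        have h2 := hb t ht
        simp only [mem_Icc] at h1 ⊢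
        refine ⟨?_, h1.2⟩
        rcases Nat.lt_or_ge a t with h | h
        · omega
        · exfalso; have : t = a := by omega
          rw [this] at ht; exact haS ht
      have := Finset.card_le_card hss
      rw [hcard, Nat.card_Icc] at this
      omega
    obtain ⟨b, hbS, hba⟩ := hbex
    have hb1 : 1 ≤ b := by
      have := hsub hbS; simp only [mem_Icc] at this; exact this.1
    obtain ⟨t1, ht1a, ht1b, ht1S, ht1S'⟩ := change_down hbS haS hba
    obtain ⟨t2, ht2a, ht2b, ht2S, ht2S'⟩ := change_up haS hmem halt
    have h3 := three_le_corners (n := n) (S := S) (t1 := t1) (t2 := t2) (t3 := m + y)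
      (by omega) (by omega) (fun h => ht1S' (h.mp ht1S))
      (by omega) (by omega) (fun h => ht2S (h.mpr ht2S'))
      (by omega) (by omega) (fun h => hnotup (h.mp hmem))
      (by omega) (by omega)
    omega
  refine (Finset.eq_of_subset_of_card_le hlow ?_).symm
  rw [hcard, Nat.card_Icc]
  omega

lemma corners_interval_le (j : ℕ) :
    cornersF n (Icc (j + 1) (j + m)) ≤ 2 := by
  apply corners_le_two (a := j) (b := j + m)
  intro t h1 h2 h3
  simp only [mem_Icc] at h3
  omega

lemma corners_twoblock_le {x : ℕ} :
    cornersF n (Icc 1 x ∪ Icc (x + (n - m) + 1) n) ≤ 2 := by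
  apply corners_le_two (a := x) (b := x + (n - m))
  intro t h1 h2 h3
  simp only [mem_union, mem_Icc] at h3
  omega

lemma twoblock_card (hmn : m < n) {x : ℕ} (hxm : x < m) :
    (Icc 1 x ∪ Icc (x + (n - m) + 1) n).card = m := by
  rw [Finset.card_union_of_disjoint, Nat.card_Icc, Nat.card_Icc]
  · omega
  · rw [Finset.disjoint_left]
    intro t ht ht'
    simp only [mem_Icc] at ht ht'
    omega

lemma hasCorner_twoblock (hm : 0 < m) (hmn : m < n) {x : ℕ} (hxm : x < m) :
    hasCornerAt n (Icc 1 x ∪ Icc (x + (n - m) + 1) n) true x (n - m) := by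
  constructor
  · refine ⟨?_, by omega, ?_⟩
    · have he : (Icc 1 x ∪ Icc (x + (n - m) + 1) n) ∩ Icc 1 (x + (n - m)) = Icc 1 x := by
        ext t
        simp only [mem_inter, mem_union, mem_Icc]
        omega
      rw [he, Nat.card_Icc]
      omega
    · simp only [if_true, mem_union, mem_Icc]
      omega
  · left
    refine ⟨by omega, ?_⟩
    simp only [mem_union, mem_Icc]
    omega

lemma hasCorner_interval (hm : 0 < m) {j : ℕ} (hj : j + m < n) :
    hasCornerAt n (Icc (j + 1) (j + m)) false m j := by
  constructor
  · refine ⟨?_, by omega, ?_⟩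
    · have he : Icc (j + 1) (j + m) ∩ Icc 1 (m + j) = Icc (j + 1) (j + m) := by
        ext t
        simp only [mem_inter, mem_Icc]
        omega
      rw [he, Nat.card_Icc]
      omega
    · simp only [Bool.false_eq_true, if_false, mem_Icc]
      omega
  · left
    refine ⟨by omega, ?_⟩
    simp only [mem_Icc]
    omega

lemma roof_horiz {ν : ℕ → ℕ} (hν0 : ν 0 = 0) (hν1 : ν 1 = m) {x : ℕ} (hxm : x < m)
    (hmn : m ≤ n) : RoofEdge 1 n ν true x (n - m) := by
  simp only [RoofEdge, if_true]
  exact ⟨1, le_refl _, le_refl _, by rw [hν1]; omega, by simp [hν0], by rw [hν1]; exact hxm⟩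

lemma roof_vert {ν : ℕ → ℕ} (hν1 : ν 1 = m) (hν2 : ν 2 = n) {y : ℕ} (hy : y + m < n) :
    RoofEdge 1 n ν false m y := by
  simp only [RoofEdge, Bool.false_eq_true, if_false]
  exact ⟨1, le_refl _, le_refl _, hν1.symm, by rw [hν2]; omega, by rw [hν1]; omega⟩

lemma special_interval {ν : ℕ → ℕ} (hm : 0 < m) (hmn : m < n)
    (hν1 : ν 1 = m) (hν2 : ν 2 = n) {j : ℕ} (hj : j + m < n) :
    IsSpecialPath 1 n ν (Icc (j + 1) (j + m)) := by
  have hsub : Icc (j + 1) (j + m) ⊆ Icc 1 n := by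
    intro t ht
    simp only [mem_Icc] at ht ⊢
    omega
  have hcard : (Icc (j + 1) (j + m)).card = m := by rw [Nat.card_Icc]; omega
  refine ⟨(pospath_iff hν1 _).mpr ⟨hsub, hcard⟩, false, m, j, roof_vert hν1 hν2 hj,
    hasCorner_interval hm hj, ?_⟩
  intro S' hS' hc'
  obtain ⟨hS'sub, hS'card⟩ := (pospath_iff hν1 S').mp hS'
  obtain ⟨hyd, hS'sub2, hS'mem⟩ := vert_struct hm hS'sub hS'card hc'
  rcases Nat.eq_zero_or_pos j with rfl | hj0
  · have e : Icc (0 + 1) (0 + m) = Icc 1 m := by norm_num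
    have hS'eq : S' = Icc 1 m := by
      apply Finset.eq_of_subset_of_card_le
      · simpa using hS'sub2
      · rw [hS'card, Nat.card_Icc]
        omega
    rw [e, hS'eq]
  · exact le_trans (corners_interval_le j)
      (vert_lower hmn hj0 hyd hS'sub2 hS'card hS'mem)

lemma special_twoblock {ν : ℕ → ℕ} (hm : 0 < m) (hmn : m < n)
    (hν0 : ν 0 = 0) (hν1 : ν 1 = m) {x : ℕ} (hxm : x < m) :
    IsSpecialPath 1 n ν (Icc 1 x ∪ Icc (x + (n - m) + 1) n) := by
  have hsub : Icc 1 x ∪ Icc (x + (n - m) + 1) n ⊆ Icc 1 n := by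
    intro t ht
    simp only [mem_union, mem_Icc] at ht ⊢
    omega
  refine ⟨(pospath_iff hν1 _).mpr ⟨hsub, twoblock_card hmn hxm⟩, true, x, n - m,
    roof_horiz hν0 hν1 hxm (le_of_lt hmn), hasCorner_twoblock hm hmn hxm, ?_⟩
  intro S' hS' hc'
  obtain ⟨hS'sub, hS'card⟩ := (pospath_iff hν1 S').mp hS'
  obtain ⟨_, hup', hxc', hnot'⟩ := horiz_struct hmn hS'sub hS'card hc'
  rcases Nat.eq_zero_or_pos x with rfl | hx0
  · have hS'eq : S' = Icc (0 + (n - m) + 1) n := by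
      refine (Finset.eq_of_subset_of_card_le hup' ?_).symm
      rw [hS'card, Nat.card_Icc]
      omega
    have he : Icc 1 0 ∪ Icc (0 + (n - m) + 1) n = Icc (0 + (n - m) + 1) n := by
      rw [Finset.Icc_eq_empty (by omega), Finset.empty_union]
    rw [hS'eq, he]
  · exact le_trans corners_twoblock_le
      (horiz_lower hmn hx0 hxm (hup' (by simp only [mem_Icc]; omega)) hxc' hnot')

lemma part1 {ν : ℕ → ℕ} (hm : 0 < m) (hmn : m < n)
    (hν0 : ν 0 = 0) (hν1 : ν 1 = m) (hν2 : ν 2 = n)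
    (S : Finset ℕ) (hsub : S ⊆ Icc 1 n) (hcard : S.card = m) :
    IsSpecialPath 1 n ν S ↔
      (∃ j, j ≤ n - m ∧ S = Icc (j + 1) (j + m)) ∨
      (∃ r, 1 ≤ r ∧ r ≤ m ∧ S = Icc 1 (m - r) ∪ Icc (n - r + 1) n) := by
  constructor
  · rintro ⟨hpos, h, x, y, hroof, hcorn, hmin⟩
    cases h
    · -- vertical edge
      obtain ⟨l, hl1, hl2, hx, _, hlt⟩ :=
        (by simpa only [RoofEdge, Bool.false_eq_true, if_false] using hroof :
          ∃ l, 1 ≤ l ∧ l ≤ 1 ∧ x = ν l ∧ n ≤ y + ν (l + 1) ∧ y + ν l < n)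
      have hl : l = 1 := by omega
      subst hl
      rw [hν1] at hx hlt
      subst x
      obtain ⟨hyd, hsub2, hmem⟩ := vert_struct hm hsub hcard hcorn
      rcases Nat.eq_zero_or_pos y with rfl | hy0
      · left
        refine ⟨0, by omega, ?_⟩
        have e : Icc (0 + 1) (0 + m) = Icc 1 m := by norm_num
        rw [e]
        apply Finset.eq_of_subset_of_card_le
        · simpa using hsub2
        · rw [hcard, Nat.card_Icc]
          omega
      · have hposC : PosPath 1 n ν (Icc (y + 1) (y + m)) := by
          refine (pospath_iff hν1 _).mpr ⟨?_, by rw [Nat.card_Icc]; omega⟩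
          intro t ht
          simp only [mem_Icc] at ht ⊢
          omega
        have hcor2 : cornersF n S ≤ 2 :=
          le_trans (hmin _ hposC (hasCorner_interval hm (by omega)))
            (corners_interval_le y)
        left
        exact ⟨y, by omega, vert_exact hm hmn hy0 hcard hsub2 hsub hyd hmem hcor2⟩
    · -- horizontal edge
      obtain ⟨l, hl1, hl2, hy, _, hlt⟩ :=
        (by simpa only [RoofEdge, if_true] using hroof :
          ∃ l, 1 ≤ l ∧ l ≤ 1 ∧ y + ν l = n ∧ ν (l - 1) ≤ x ∧ x < ν l)
      have hl : l = 1 := by omega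
      subst hl
      rw [hν1] at hy hlt
      have hyy : y = n - m := by omega
      subst hyy
      obtain ⟨hxm, hup, hxc, hnot⟩ := horiz_struct hmn hsub hcard hcorn
      rcases Nat.eq_zero_or_pos x with rfl | hx0
      · left
        refine ⟨n - m, le_refl _, ?_⟩
        have e : n - m + m = n := by omega
        rw [e]
        refine (Finset.eq_of_subset_of_card_le (by simpa using hup) ?_).symm
        rw [hcard, Nat.card_Icc]
        omega
      · have hposC : PosPath 1 n ν (Icc 1 x ∪ Icc (x + (n - m) + 1) n) := by
          refine (pospath_iff hν1 _).mpr ⟨?_, twoblock_card hmn hxm⟩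
          intro t ht
          simp only [mem_union, mem_Icc] at ht ⊢
          omega
        have hcor2 : cornersF n S ≤ 2 :=
          le_trans (hmin _ hposC (hasCorner_twoblock hm hmn hxm)) corners_twoblock_le
        right
        refine ⟨m - x, by omega, by omega, ?_⟩
        have e1 : m - (m - x) = x := by omega
        have e2 : n - (m - x) + 1 = x + (n - m) + 1 := by omega
        rw [e1, e2]
        exact horiz_exact hmn hx0 hxm hsub hcard hup hxc hnot hcor2
  · rintro (⟨j, hj, rfl⟩ | ⟨r, hr1, hr2, rfl⟩)
    · rcases Nat.lt_or_ge j (n - m) with h | h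
      · exact special_interval hm hmn hν1 hν2 (by omega)
      · have hjeq : j = n - m := by omega
        subst hjeq
        have e : Icc (n - m + 1) (n - m + m) = Icc 1 0 ∪ Icc (0 + (n - m) + 1) n := by
          ext t
          simp only [mem_union, mem_Icc]
          omega
        rw [e]
        exact special_twoblock hm hmn hν0 hν1 hm
    · rcases Nat.lt_or_ge r m with h | h
      · have e : Icc 1 (m - r) ∪ Icc (n - r + 1) n
            = Icc 1 (m - r) ∪ Icc ((m - r) + (n - m) + 1) n := by
          congr 2
          omega
        rw [e]
        exact special_twoblock hm hmn hν0 hν1 (by omega)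
      · have hreq : r = m := by omega
        have e : Icc 1 (m - r) ∪ Icc (n - r + 1) n
            = Icc 1 0 ∪ Icc (0 + (n - m) + 1) n := by
          ext t
          simp only [mem_union, mem_Icc]
          omega
        rw [e]
        exact special_twoblock hm hmn hν0 hν1 hm

/-- enumeration of the special paths -/
def spf (n m i : ℕ) : Finset ℕ :=
  if i ≤ n - m then Icc (i + 1) (i + m)
  else Icc 1 (m - (i - (n - m))) ∪ Icc (n - (i - (n - m)) + 1) n

lemma count_lemma {ν : ℕ → ℕ} (hm : 0 < m) (hmn : m < n)
    (hν0 : ν 0 = 0) (hν1 : ν 1 = m) (hν2 : ν 2 = n) :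
    Nat.card {S : Finset ℕ //
      S ⊆ Icc 1 n ∧ S.card = m ∧ IsSpecialPath 1 n ν S} = n := by
  have keyiff : ∀ S : Finset ℕ,
      (S ⊆ Icc 1 n ∧ S.card = m ∧ IsSpecialPath 1 n ν S) ↔
        S ∈ (Finset.range n).image (spf n m) := by
    intro S
    constructor
    · rintro ⟨hsub, hcard, hsp⟩
      rw [part1 hm hmn hν0 hν1 hν2 S hsub hcard] at hsp
      rw [Finset.mem_image]
      rcases hsp with ⟨j, hj, rfl⟩ | ⟨r, hr1, hr2, rfl⟩
      · exact ⟨j, Finset.mem_range.mpr (by omega), by rw [spf, if_pos hj]⟩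
      · rcases Nat.lt_or_ge r m with h | h
        · refine ⟨n - m + r, Finset.mem_range.mpr (by omega), ?_⟩
          rw [spf, if_neg (by omega)]
          have e : n - m + r - (n - m) = r := by omega
          rw [e]
        · have hreq : r = m := by omega
          refine ⟨n - m, Finset.mem_range.mpr (by omega), ?_⟩
          rw [spf, if_pos (le_refl _)]
          ext t
          simp only [mem_union, mem_Icc]
          omega
    · intro hS
      rw [Finset.mem_image] at hS
      obtain ⟨i, hi, rfl⟩ := hS
      rw [Finset.mem_range] at hi
      rcases le_or_gt i (n - m) with h | h
      · rw [spf, if_pos h]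
        have hsub : Icc (i + 1) (i + m) ⊆ Icc 1 n := by
          intro t ht
          simp only [mem_Icc] at ht ⊢
          omega
        have hcard : (Icc (i + 1) (i + m)).card = m := by rw [Nat.card_Icc]; omega
        exact ⟨hsub, hcard, (part1 hm hmn hν0 hν1 hν2 _ hsub hcard).mpr
          (Or.inl ⟨i, h, rfl⟩)⟩
      · rw [spf, if_neg (by omega)]
        set r := i - (n - m) with hr
        have hr1 : 1 ≤ r := by omega
        have hr2 : r ≤ m := by omega
        have hsub : Icc 1 (m - r) ∪ Icc (n - r + 1) n ⊆ Icc 1 n := by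
          intro t ht
          simp only [mem_union, mem_Icc] at ht ⊢
          omega
        have hcard : (Icc 1 (m - r) ∪ Icc (n - r + 1) n).card = m := by
          rw [Finset.card_union_of_disjoint, Nat.card_Icc, Nat.card_Icc]
          · omega
          · rw [Finset.disjoint_left]
            intro t ht ht'
            simp only [mem_Icc] at ht ht'
            omega
        exact ⟨hsub, hcard, (part1 hm hmn hν0 hν1 hν2 _ hsub hcard).mpr
          (Or.inr ⟨r, hr1, hr2, rfl⟩)⟩
  rw [Nat.card_congr (Equiv.subtypeEquivRight keyiff)]
  rw [Nat.card_eq_fintype_card, Fintype.card_coe]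
  rw [Finset.card_image_of_injOn, Finset.card_range]
  -- injectivity
  intro i hi i' hi' hff
  simp only [Finset.coe_range, Set.mem_Iio] at hi hi'
  by_cases h : i ≤ n - m <;> by_cases h' : i' ≤ n - m
  · -- both intervals
    have m1 : i + 1 ∈ spf n m i := by
      rw [spf, if_pos h]; simp only [mem_Icc]; omega
    have m2 : i' + 1 ∈ spf n m i' := by
      rw [spf, if_pos h']; simp only [mem_Icc]; omega
    rw [hff] at m1
    rw [← hff] at m2
    rw [spf, if_pos h'] at m1
    rw [spf, if_pos h] at m2
    simp only [mem_Icc] at m1 m2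
    omega
  · -- interval vs twoblock
    exfalso
    set r' := i' - (n - m) with hr'
    have hrb : 1 ≤ r' ∧ r' ≤ m - 1 := by omega
    have m1 : (1 : ℕ) ∈ spf n m i' := by
      rw [spf, if_neg (by omega)]
      simp only [mem_union, mem_Icc]
      omega
    have m2 : n ∈ spf n m i' := by
      rw [spf, if_neg (by omega)]
      simp only [mem_union, mem_Icc]
      omega
    rw [← hff, spf, if_pos h] at m1 m2
    simp only [mem_Icc] at m1 m2
    omega
  · -- twoblock vs interval
    exfalso
    set r := i - (n - m) with hr
    have hrb : 1 ≤ r ∧ r ≤ m - 1 := by omega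
    have m1 : (1 : ℕ) ∈ spf n m i := by
      rw [spf, if_neg (by omega)]
      simp only [mem_union, mem_Icc]
      omega
    have m2 : n ∈ spf n m i := by
      rw [spf, if_neg (by omega)]
      simp only [mem_union, mem_Icc]
      omega
    rw [hff, spf, if_pos h'] at m1 m2
    simp only [mem_Icc] at m1 m2
    omega
  · -- both twoblocks
    set r := i - (n - m) with hr
    set r' := i' - (n - m) with hr'
    have hrb : 1 ≤ r ∧ r ≤ m - 1 := by omega
    have hrb' : 1 ≤ r' ∧ r' ≤ m - 1 := by omega
    have m1 : m - r + 1 ∉ spf n m i := by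
      rw [spf, if_neg (by omega)]
      simp only [mem_union, mem_Icc]
      omega
    have m2 : m - r' + 1 ∉ spf n m i' := by
      rw [spf, if_neg (by omega)]
      simp only [mem_union, mem_Icc]
      omega
    rw [hff, spf, if_neg (by omega)] at m1
    rw [← hff, spf, if_neg (by omega)] at m2
    simp only [mem_union, mem_Icc] at m1 m2
    omega

end Struct

end SPaux


/-- For the Grassmannian `Gr(m,n)` (ladder `Λ(m;n)`, i.e. `k = 1`, `ν = (0, m, n)`), the
special paths correspond exactly to the partitions in the `m × (n−m)` rectangle that are
rectangles of full height `m` — the constant partitions `(j,…,j)`, `0 ≤ j ≤ n−m`, with path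
`I = {j+1, …, j+m}` — or of full width `n−m` — `(n−m,…,n−m,0,…,0)` with `r` copies,
`1 ≤ r ≤ m`, with path `I = {1,…,m−r} ∪ {n−r+1,…,n}` — together with the zero partition;
in total there are `n` special paths, matching `−K_{Gr(m,n)} = n σ^{s_m}`. -/
theorem special_paths_grassmannian (n m : ℕ) (hm : 0 < m) (hmn : m < n)
    (ν : ℕ → ℕ) (hν : ν = fun l => if l = 0 then 0 else if l = 1 then m else n) :
    (∀ S : Finset ℕ, S ⊆ Finset.Icc 1 n → S.card = m →
      (IsSpecialPath 1 n ν S ↔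
        (∃ j, j ≤ n - m ∧ S = Finset.Icc (j + 1) (j + m)) ∨
        (∃ r, 1 ≤ r ∧ r ≤ m ∧ S = Finset.Icc 1 (m - r) ∪ Finset.Icc (n - r + 1) n))) ∧
    Nat.card {S : Finset ℕ //
        S ⊆ Finset.Icc 1 n ∧ S.card = m ∧ IsSpecialPath 1 n ν S} = n := by
  subst hν
  have hν0 : (fun l => if l = 0 then 0 else if l = 1 then m else n) 0 = 0 := rfl
  have hν1 : (fun l => if l = 0 then 0 else if l = 1 then m else n) 1 = m := rfl
  have hν2 : (fun l => if l = 0 then 0 else if l = 1 then m else n) 2 = n := rfl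
  constructor
  · intro S hsub hcard
    exact SPaux.part1 hm hmn hν0 hν1 hν2 S hsub hcard
  · exact SPaux.count_lemma hm hmn hν0 hν1 hν2
end

section
/- Let V be the set of vertices of the Gelfand-Cetlin polytope of the complete flag variety Fℓ_n. A vertex z = (λ^{(i)}_j) lies in at most n(n−1)/2 facets, i.e., is a regular vertex, if and only if for all 1 ≤ j ≤ i with i+2 ≤ n, not all four equalities λ^{(i)}_j = λ^{(i+1)}_{j+1} = λ^{(i+1)}_j = λ^{(i+2)}_{j+1} hold. The number of regular vertices equals n!. -/
/-!
If an entry of an extreme point `z` of the Gelfand–Cetlin polytope were strictly between its two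
parents, then moving all entries of the same value in the rows below it up and down would stay in
the polytope; so every entry below the top row copies a parent. Hence `z` lies on at least one
facet per such entry, i.e. on at least `n(n-1)/2` facets, with equality iff no entry copies both
parents; for strictly decreasing `λ` this is equivalent to the absence of the square of four
equalities. At a regular vertex all rows are strictly decreasing, so row `i` is row `i + 1` with
one of its `i + 1` entries deleted, and these choices give `n!` regular vertices.
-/

open Filter Topology

lemma eq_zero_of_eventually_add_smul_mem {E : Type*} [AddCommGroup E] [Module ℝ E] {C : Set E}
    {x d : E} (hx : x ∈ C.extremePoints ℝ) (hd : ∀ᶠ t in 𝓝 (0 : ℝ), x + t • d ∈ C) :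
    d = 0 := by
  obtain ⟨ε, hε, hball⟩ := Metric.eventually_nhds_iff.1 hd
  have hmem : ∀ t : ℝ, |t| < ε → x + t • d ∈ C := fun t ht => hball (by simpa using ht)
  have hpos : 0 < ε / 2 := half_pos hε
  have hlt : |ε / 2| < ε := by rw [abs_of_pos hpos]; linarith
  have hmid : x ∈ openSegment ℝ (x + (ε / 2) • d) (x + (-(ε / 2)) • d) :=
    ⟨1 / 2, 1 / 2, by norm_num, by norm_num, by norm_num, by module⟩
  have hx' := hx.2 (hmem _ hlt) (hmem _ (by rwa [abs_neg])) hmid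
  simpa [hpos.ne'] using hx'

lemma eventually_add_mul_le {a b c d : ℝ} (hab : a ≤ b) (hcd : a = b → c = d) :
    ∀ᶠ t in 𝓝 (0 : ℝ), a + t * c ≤ b + t * d := by
  rcases hab.eq_or_lt with rfl | hlt
  · simp [hcd rfl]
  · exact (ContinuousAt.eventually_lt (by fun_prop) (by fun_prop) (by simpa using hlt)).mono
      fun _ => le_of_lt

lemma eq_of_mem_openSegment {y w c : ℝ} (h : c ∈ openSegment ℝ y w)
    (hside : y ≤ c ∧ w ≤ c ∨ c ≤ y ∧ c ≤ w) : y = c ∧ w = c := by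
  by_cases hyw : y = w
  · subst hyw
    rw [openSegment_same, Set.mem_singleton_iff] at h
    exact ⟨h.symm, h.symm⟩
  · rw [openSegment_eq_Ioo' hyw, Set.mem_Ioo] at h
    rcases hside with ⟨h₁, h₂⟩ | ⟨h₁, h₂⟩
    · exact absurd h.2 (max_le h₁ h₂).not_gt
    · exact absurd h.1 (le_min h₁ h₂).not_gt

namespace GelfandCetlin

def gcPolytope (n : ℕ) (lam : ℕ → ℝ) : Set (ℕ → ℕ → ℝ) :=
  {x | (∀ i j, ¬(1 ≤ j ∧ j ≤ i ∧ i ≤ n) → x i j = 0) ∧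
    (∀ j, 1 ≤ j → j ≤ n → x n j = lam j) ∧
    (∀ i j, 1 ≤ j → j ≤ i → i < n →
      x (i + 1) j ≥ x i j ∧ x i j ≥ x (i + 1) (j + 1))}

def CopiesParent (n : ℕ) (z : ℕ → ℕ → ℝ) : Prop :=
  ∀ i j, 1 ≤ j → j ≤ i → i < n → z i j = z (i + 1) j ∨ z i j = z (i + 1) (j + 1)

def NoDoubleParent (n : ℕ) (z : ℕ → ℕ → ℝ) : Prop :=
  ∀ i j, 1 ≤ j → j ≤ i → i < n → ¬(z i j = z (i + 1) j ∧ z i j = z (i + 1) (j + 1))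

def facetEqs (n : ℕ) (z : ℕ → ℕ → ℝ) : Set (ℕ × ℕ × Bool) :=
  {p | 1 ≤ p.2.1 ∧ p.2.1 ≤ p.1 ∧ p.1 < n ∧
    (if p.2.2 then z p.1 p.2.1 = z (p.1 + 1) p.2.1 else z p.1 p.2.1 = z (p.1 + 1) (p.2.1 + 1))}

variable {n : ℕ} {lam : ℕ → ℝ} {z : ℕ → ℕ → ℝ}

theorem induction_from_top {P : ℕ → ℕ → Prop} (hout : ∀ i j, ¬(1 ≤ j ∧ j ≤ i ∧ i ≤ n) → P i j)
    (htop : ∀ j, 1 ≤ j → j ≤ n → P n j)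
    (hstep : ∀ i j, 1 ≤ j → j ≤ i → i < n → (∀ j', P (i + 1) j') → P i j) (i j : ℕ) :
    P i j := by
  suffices h : ∀ m i j, n - i = m → P i j from h _ i j rfl
  intro m
  induction m with
  | zero =>
    intro i j him
    by_cases htri : 1 ≤ j ∧ j ≤ i ∧ i ≤ n
    · obtain rfl : i = n := by omega
      exact htop j htri.1 htri.2.1
    · exact hout i j htri
  | succ m ih =>
    intro i j him
    by_cases htri : 1 ≤ j ∧ j ≤ i ∧ i ≤ n
    · exact hstep i j htri.1 htri.2.1 (by omega) fun j' => ih (i + 1) j' (by omega)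
    · exact hout i j htri

lemma row_antitone (hz : z ∈ gcPolytope n lam) {i j j' : ℕ} (hj : 1 ≤ j) (hjj' : j ≤ j')
    (hj'i : j' ≤ i) (hin : i ≤ n) : z i j' ≤ z i j := by
  induction j', hjj' using Nat.le_induction with
  | base => rfl
  | succ c hjc ih =>
    have h := hz.2.2 (i - 1) c (by omega) (by omega) (by omega)
    rw [Nat.sub_add_cancel (by omega)] at h
    exact h.2.trans (h.1.trans (ih (by omega)))

lemma eventually_add_smul_mem_gcPolytope (hz : z ∈ gcPolytope n lam) {d : ℕ → ℕ → ℝ}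
    (hd : ∀ i j, ¬(1 ≤ j ∧ j ≤ i ∧ i < n) → d i j = 0)
    (hleft : ∀ i j, 1 ≤ j → j ≤ i → i < n → z i j = z (i + 1) j → d i j = d (i + 1) j)
    (hright : ∀ i j, 1 ≤ j → j ≤ i → i < n →
      z i j = z (i + 1) (j + 1) → d i j = d (i + 1) (j + 1)) :
    ∀ᶠ t in 𝓝 (0 : ℝ), z + t • d ∈ gcPolytope n lam := by
  obtain ⟨hzero, htop, hint⟩ := hz
  have hfin : {p : ℕ × ℕ | 1 ≤ p.2 ∧ p.2 ≤ p.1 ∧ p.1 < n}.Finite :=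
    ((Set.finite_Iio n).prod (Set.finite_Iio n)).subset fun p ⟨_, h2, h3⟩ =>
      ⟨h3, show p.2 < n by omega⟩
  have hev := (hfin.eventually_all (l := 𝓝 (0 : ℝ))).2 fun p hp =>
    (eventually_add_mul_le (hint p.1 p.2 hp.1 hp.2.1 hp.2.2).1
        (hleft p.1 p.2 hp.1 hp.2.1 hp.2.2)).and
      (eventually_add_mul_le (hint p.1 p.2 hp.1 hp.2.1 hp.2.2).2
        (fun h => (hright p.1 p.2 hp.1 hp.2.1 hp.2.2 h.symm).symm))
  filter_upwards [hev] with t ht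
  refine ⟨fun i j h => ?_, fun j h1 h2 => ?_, fun i j h1 h2 h3 => ht (i, j) ⟨h1, h2, h3⟩⟩
  · simp [hzero i j h, hd i j (by omega)]
  · simp [htop j h1 h2, hd n j (by omega)]

lemma copiesParent_of_mem_extremePoints (hz : z ∈ (gcPolytope n lam).extremePoints ℝ) :
    CopiesParent n z := by
  intro i₀ j₀ hj₀ hj₀i hi₀
  by_contra! hne
  obtain ⟨hL, hR⟩ := hne
  have hint := hz.1.2.2 i₀ j₀ hj₀ hj₀i hi₀
  have hlt₁ : z i₀ j₀ < z (i₀ + 1) j₀ := lt_of_le_of_ne hint.1 hL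
  have hlt₂ : z (i₀ + 1) (j₀ + 1) < z i₀ j₀ := lt_of_le_of_ne hint.2 (Ne.symm hR)
  -- `z i₀ j₀` lies strictly between two consecutive entries of the antitone row `i₀ + 1`
  have hrow : ∀ c, 1 ≤ c → c ≤ i₀ + 1 → z (i₀ + 1) c ≠ z i₀ j₀ := by
    intro c hc hci
    rcases le_or_gt c j₀ with h | h
    · exact (hlt₁.trans_le (row_antitone hz.1 hc h (by omega) (by omega))).ne'
    · exact ((row_antitone hz.1 (by omega) h hci (by omega)).trans_lt hlt₂).ne
  -- the entries of value `z i₀ j₀` in rows `≤ i₀` can be moved together within the polytope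
  set d : ℕ → ℕ → ℝ := fun a b =>
    if (1 ≤ b ∧ b ≤ a ∧ a ≤ i₀) ∧ z a b = z i₀ j₀ then 1 else 0 with hd
  have hparent : ∀ a b b', 1 ≤ b → b ≤ a → (b' = b ∨ b' = b + 1) →
      z a b = z (a + 1) b' → d a b = d (a + 1) b' := by
    intro a b b' hb hba hb' he
    have hiff : ((1 ≤ b ∧ b ≤ a ∧ a ≤ i₀) ∧ z a b = z i₀ j₀) ↔
        ((1 ≤ b' ∧ b' ≤ a + 1 ∧ a + 1 ≤ i₀) ∧ z (a + 1) b' = z i₀ j₀) := by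
      rcases lt_trichotomy a i₀ with h | rfl | h
      · rw [he]; exact and_congr_left' (by omega)
      · rw [he]; exact iff_of_false (fun h' => hrow b' (by omega) (by omega) h'.2) (by omega)
      · exact iff_of_false (by omega) (by omega)
    simp only [hd, hiff]
  have hd0 := eq_zero_of_eventually_add_smul_mem hz (eventually_add_smul_mem_gcPolytope hz.1
    (fun a b h => if_neg (by omega))
    (fun a b h1 h2 _ he => hparent a b b h1 h2 (.inl rfl) he)
    (fun a b h1 h2 _ he => hparent a b (b + 1) h1 h2 (.inr rfl) he))
  have := congrFun (congrFun hd0 i₀) j₀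
  simp [hj₀, hj₀i] at this

lemma mem_extremePoints_of_copiesParent (hz : z ∈ gcPolytope n lam) (hcp : CopiesParent n z) :
    z ∈ (gcPolytope n lam).extremePoints ℝ := by
  refine mem_extremePoints.2 ⟨hz, fun y hy w hw ⟨a, b, ha, hb, hab, hcomb⟩ => ?_⟩
  have hseg : ∀ i j, z i j ∈ openSegment ℝ (y i j) (w i j) := fun i j =>
    ⟨a, b, ha, hb, hab, congrFun (congrFun hcomb i) j⟩
  suffices h : ∀ i j, y i j = z i j ∧ w i j = z i j from
    ⟨funext fun i => funext fun j => (h i j).1, funext fun i => funext fun j => (h i j).2⟩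
  intro i j
  induction i, j using induction_from_top (n := n) with
  | hout i j h => simp only [hy.1 i j h, hw.1 i j h, hz.1 i j h, and_self]
  | htop j h1 h2 => simp only [hy.2.1 j h1 h2, hw.2.1 j h1 h2, hz.2.1 j h1 h2, and_self]
  | hstep i j h1 h2 hin ih =>
    have hyi := hy.2.2 i j h1 h2 hin
    have hwi := hw.2.2 i j h1 h2 hin
    refine eq_of_mem_openSegment (hseg i j) ?_
    rcases hcp i j h1 h2 hin with he | he
    · obtain ⟨hy', hw'⟩ := ih j
      rw [he]
      exact .inl ⟨hy' ▸ hyi.1, hw' ▸ hwi.1⟩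
    · obtain ⟨hy', hw'⟩ := ih (j + 1)
      rw [he]
      exact .inr ⟨hy' ▸ hyi.2, hw' ▸ hwi.2⟩

lemma mem_extremePoints_gcPolytope_iff :
    z ∈ (gcPolytope n lam).extremePoints ℝ ↔ z ∈ gcPolytope n lam ∧ CopiesParent n z :=
  ⟨fun hz => ⟨hz.1, copiesParent_of_mem_extremePoints hz⟩,
    fun hz => mem_extremePoints_of_copiesParent hz.1 hz.2⟩

lemma ncard_triangle (n : ℕ) :
    {p : ℕ × ℕ | 1 ≤ p.2 ∧ p.2 ≤ p.1 ∧ p.1 < n}.ncard = n * (n - 1) / 2 := by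
  have h : {p : ℕ × ℕ | 1 ≤ p.2 ∧ p.2 ≤ p.1 ∧ p.1 < n} =
      (fun p : Σ _ : ℕ, ℕ => (p.1, p.2)) '' ↑((Finset.range n).sigma fun i => Finset.Icc 1 i) := by
    ext ⟨i, j⟩
    simp only [Set.mem_ofPred_eq, Set.mem_image, Finset.coe_sigma, Set.mem_sigma_iff,
      Finset.coe_range, Set.mem_Iio, Finset.coe_Icc, Set.mem_Icc]
    constructor
    · rintro ⟨h1, h2, h3⟩
      exact ⟨⟨i, j⟩, ⟨h3, h1, h2⟩, rfl⟩
    · rintro ⟨⟨i', j'⟩, ⟨h3, h1, h2⟩, he⟩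
      simp only [Prod.mk.injEq] at he
      obtain ⟨rfl, rfl⟩ := he
      exact ⟨h1, h2, h3⟩
  rw [h, Set.ncard_image_of_injective _ (fun p q he => ?_), Set.ncard_coe_finset,
    Finset.card_sigma]
  · simp [Finset.sum_range_id]
  · simp only [Prod.mk.injEq] at he
    exact Sigma.ext he.1 (heq_of_eq he.2)

lemma ncard_facetEqs_le_iff (hcp : CopiesParent n z) :
    (facetEqs n z).ncard ≤ n * (n - 1) / 2 ↔ NoDoubleParent n z := by
  -- forgetting the side maps `facetEqs n z` onto the triangle, injectively iff no double parent
  set f : ℕ × ℕ × Bool → ℕ × ℕ := fun p => (p.1, p.2.1)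
  have himage : f '' facetEqs n z = {p : ℕ × ℕ | 1 ≤ p.2 ∧ p.2 ≤ p.1 ∧ p.1 < n} := by
    ext ⟨i, j⟩
    constructor
    · rintro ⟨⟨i', j', b⟩, ⟨h1, h2, h3, -⟩, he⟩
      simp only [f, Prod.mk.injEq] at he
      obtain ⟨rfl, rfl⟩ := he
      exact ⟨h1, h2, h3⟩
    · rintro ⟨h1, h2, h3⟩
      rcases hcp i j h1 h2 h3 with h | h
      · exact ⟨(i, j, true), ⟨h1, h2, h3, h⟩, rfl⟩
      · exact ⟨(i, j, false), ⟨h1, h2, h3, h⟩, rfl⟩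
  have hfin : (facetEqs n z).Finite :=
    ((Set.finite_Iio n).prod ((Set.finite_Iio n).prod Set.finite_univ)).subset
      fun p ⟨_, h2, h3, _⟩ => ⟨h3, show p.2.1 < n by omega, trivial⟩
  rw [← ncard_triangle, ← himage, (Set.ncard_image_le hfin).ge_iff_eq', eq_comm,
    Set.ncard_image_iff hfin]
  constructor
  · rintro hinj i j h1 h2 h3 ⟨hl, hr⟩
    have := @hinj (i, j, true) ⟨h1, h2, h3, hl⟩ (i, j, false) ⟨h1, h2, h3, hr⟩ rfl
    simp at this
  · rintro hnd ⟨i, j, b⟩ ⟨h1, h2, h3, hb⟩ ⟨i', j', b'⟩ ⟨-, -, -, hb'⟩ he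
    simp only [f, Prod.mk.injEq] at he
    obtain ⟨rfl, rfl⟩ := he
    cases b <;> cases b' <;> simp only [Bool.false_eq_true, ↓reduceIte] at hb hb'
    · rfl
    · exact (hnd i j h1 h2 h3 ⟨hb', hb⟩).elim
    · exact (hnd i j h1 h2 h3 ⟨hb, hb'⟩).elim
    · rfl

lemma row_strictAnti_of_noDoubleParent (hz : z ∈ gcPolytope n lam) (hnd : NoDoubleParent n z)
    {i j : ℕ} (hj : 1 ≤ j) (hji : j < i) (hin : i ≤ n) : z i (j + 1) < z i j := by
  have h := hz.2.2 (i - 1) j hj (by omega) (by omega)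
  have hnd' := hnd (i - 1) j hj (by omega) (by omega)
  rw [Nat.sub_add_cancel (by omega)] at h hnd'
  refine lt_of_le_of_ne (h.2.trans h.1) fun he => hnd' ⟨?_, ?_⟩
  · exact le_antisymm h.1 (he ▸ h.2)
  · exact le_antisymm (he ▸ h.1) h.2

lemma noDoubleParent_iff_no_square (hstrict : ∀ j, 1 ≤ j → j < n → lam (j + 1) < lam j)
    (hz : z ∈ gcPolytope n lam) :
    NoDoubleParent n z ↔ ∀ i j, 1 ≤ j → j ≤ i → i + 2 ≤ n →
      ¬(z i j = z (i + 1) (j + 1) ∧ z (i + 1) j = z (i + 1) (j + 1) ∧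
          z (i + 2) (j + 1) = z (i + 1) (j + 1)) := by
  constructor
  · rintro hnd i j h1 h2 h3 ⟨hr, hrow, -⟩
    exact hnd i j h1 h2 (by omega) ⟨hr.trans hrow.symm, hr⟩
  · rintro hsq i j h1 h2 h3 ⟨hl, hr⟩
    have hrow : z (i + 1) j = z (i + 1) (j + 1) := hl.symm.trans hr
    rcases Nat.lt_or_ge (i + 1) n with h | h
    · have hint := hz.2.2 (i + 1) j h1 (by omega) h
      have hint' := hz.2.2 (i + 1) (j + 1) (by omega) (by omega) h
      exact hsq i j h1 h2 (by omega)
        ⟨hr, hrow, le_antisymm (hrow ▸ hint.2) hint'.1⟩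
    · obtain rfl : n = i + 1 := by omega
      rw [hz.2.1 j h1 (by omega), hz.2.1 (j + 1) (by omega) (by omega)] at hrow
      exact (hstrict j h1 (by omega)).ne' hrow

lemma copiesParent_right_succ (hz : z ∈ gcPolytope n lam) (hcp : CopiesParent n z)
    (hnd : NoDoubleParent n z) {i j : ℕ} (hj : 1 ≤ j) (hji : j + 1 ≤ i) (hin : i < n)
    (h : z i j = z (i + 1) (j + 1)) : z i (j + 1) = z (i + 1) (j + 1 + 1) :=
  (hcp i (j + 1) (by omega) hji hin).resolve_left fun hl =>
    (row_strictAnti_of_noDoubleParent hz hnd hj (by omega) hin.le).ne (hl.trans h.symm)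

/-- Row `i` of `gcVertex lam k` is row `i + 1` with its entry in position `k i + 1` deleted. -/
def gcVertex (lam : ℕ → ℝ) (k : (i : Fin n) → Fin (i + 1)) (i j : ℕ) : ℝ :=
  if 1 ≤ j ∧ j ≤ i ∧ i ≤ n then
    if h : i < n then gcVertex lam k (i + 1) (if j ≤ k ⟨i, h⟩ then j else j + 1) else lam j
  else 0
termination_by n - i

variable {k : (i : Fin n) → Fin (i + 1)}

lemma gcVertex_of_not_mem {i j : ℕ} (h : ¬(1 ≤ j ∧ j ≤ i ∧ i ≤ n)) : gcVertex lam k i j = 0 := by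
  rw [gcVertex, if_neg h]

lemma gcVertex_top {j : ℕ} (h1 : 1 ≤ j) (h2 : j ≤ n) : gcVertex lam k n j = lam j := by
  rw [gcVertex, if_pos ⟨h1, h2, le_rfl⟩, dif_neg (lt_irrefl n)]

lemma gcVertex_of_lt {i j : ℕ} (h1 : 1 ≤ j) (h2 : j ≤ i) (hin : i < n) :
    gcVertex lam k i j = gcVertex lam k (i + 1) (if j ≤ k ⟨i, hin⟩ then j else j + 1) := by
  rw [gcVertex, if_pos ⟨h1, h2, hin.le⟩, dif_pos hin]

lemma gcVertex_strictAnti (hstrict : ∀ j, 1 ≤ j → j < n → lam (j + 1) < lam j) {i j : ℕ}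
    (hj : 1 ≤ j) (hji : j < i) (hin : i ≤ n) : gcVertex lam k i (j + 1) < gcVertex lam k i j := by
  induction i, j using induction_from_top (n := n) with
  | hout i j h => omega
  | htop j h1 h2 =>
    rw [gcVertex_top (j := j + 1) (by omega) hji, gcVertex_top h1 h2]
    exact hstrict j h1 hji
  | hstep i j h1 h2 hi ih =>
    rw [gcVertex_of_lt h1 h2 hi, gcVertex_of_lt (by omega) (by omega) hi]
    split_ifs with hl hr hr
    · exact ih j h1 (by omega) hi
    · omega
    · exact (ih (j + 1) (by omega) (by omega) hi).trans (ih j h1 (by omega) hi)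
    · exact ih (j + 1) (by omega) (by omega) hi

lemma gcVertex_copiesParent : CopiesParent n (gcVertex lam k) := by
  intro i j h1 h2 hin
  rw [gcVertex_of_lt h1 h2 hin]
  split_ifs
  · exact .inl rfl
  · exact .inr rfl

lemma gcVertex_mem (hstrict : ∀ j, 1 ≤ j → j < n → lam (j + 1) < lam j) :
    gcVertex lam k ∈ gcPolytope n lam := by
  refine ⟨fun i j h => gcVertex_of_not_mem h, fun j h1 h2 => gcVertex_top h1 h2,
    fun i j h1 h2 hin => ?_⟩
  have hlt := gcVertex_strictAnti (k := k) hstrict h1 (by omega : j < i + 1) hin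
  rw [gcVertex_of_lt h1 h2 hin]
  split_ifs
  · exact ⟨le_rfl, hlt.le⟩
  · exact ⟨hlt.le, le_rfl⟩

lemma gcVertex_noDoubleParent (hstrict : ∀ j, 1 ≤ j → j < n → lam (j + 1) < lam j) :
    NoDoubleParent n (gcVertex lam k) :=
  fun i j h1 h2 hin ⟨hl, hr⟩ =>
    (gcVertex_strictAnti (k := k) hstrict h1 (by omega : j < i + 1) hin).ne (hr.symm.trans hl)

lemma gcVertex_injective (hstrict : ∀ j, 1 ≤ j → j < n → lam (j + 1) < lam j) :
    Function.Injective (gcVertex (n := n) lam) := by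
  -- if `k i < k' i`, the entry in position `k i + 1` of row `i` copies different parents
  have key : ∀ k k' : (i : Fin n) → Fin (i + 1), gcVertex lam k = gcVertex lam k' →
      ∀ i, (k i : ℕ) < k' i → False := by
    rintro k k' he ⟨i, hi⟩ hlt
    have hk' : (k' ⟨i, hi⟩ : ℕ) ≤ i := Nat.lt_succ_iff.1 (k' ⟨i, hi⟩).2
    set j := (k ⟨i, hi⟩ : ℕ) + 1
    have hright := gcVertex_of_lt (lam := lam) (k := k) (j := j) (by omega) (by omega) hi
    have hleft := gcVertex_of_lt (lam := lam) (k := k') (j := j) (by omega) (by omega) hi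
    rw [if_neg (by omega)] at hright
    rw [if_pos (by omega), ← he, hright] at hleft
    exact (gcVertex_strictAnti (k := k) hstrict (by omega) (by omega) hi).ne hleft
  intro k k' he
  funext i
  by_contra hne
  rcases Nat.lt_or_gt_of_ne (Fin.val_ne_of_ne hne) with h | h
  · exact key k k' he i h
  · exact key k' k he.symm i h

lemma exists_gcVertex_eq (hz : z ∈ gcPolytope n lam) (hcp : CopiesParent n z)
    (hnd : NoDoubleParent n z) : ∃ k : (i : Fin n) → Fin (i + 1), gcVertex lam k = z := by
  -- the entries of row `i` copying their left parent form an initial segment `1, …, m i`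
  let IsLeftUpTo (i m : ℕ) : Prop := ∀ j, 1 ≤ j → j ≤ m → z i j = z (i + 1) j
  let m (i : ℕ) : ℕ := Nat.findGreatest (IsLeftUpTo i) i
  have hleft : ∀ i, IsLeftUpTo i (m i) := fun i =>
    Nat.findGreatest_spec (Nat.zero_le i) fun j h1 h2 => absurd h2 (by omega)
  have hright : ∀ i j, i < n → m i < j → j ≤ i → z i j = z (i + 1) (j + 1) := by
    intro i j hin hmj hji
    induction j, hmj using Nat.le_induction with
    | base =>
      refine (hcp i _ (by omega) hji hin).resolve_left fun hl => ?_
      refine Nat.findGreatest_is_greatest (P := IsLeftUpTo i) (k := m i + 1) (Nat.lt_succ_self _)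
        hji fun j h1 h2 => ?_
      rcases Nat.lt_or_ge j (m i + 1) with h | h
      · exact hleft i j h1 (by omega)
      · rwa [show j = m i + 1 by omega]
    | succ j hmj ih =>
      exact copiesParent_right_succ hz hcp hnd (by omega) hji hin (ih (by omega))
  refine ⟨fun i => ⟨m i, Nat.lt_succ_of_le (Nat.findGreatest_le _)⟩,
    funext fun i => funext fun j => ?_⟩
  induction i, j using induction_from_top (n := n) with
  | hout i j h => rw [gcVertex_of_not_mem h, hz.1 i j h]
  | htop j h1 h2 => rw [gcVertex_top h1 h2, hz.2.1 j h1 h2]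
  | hstep i j h1 h2 hin ih =>
    rw [gcVertex_of_lt h1 h2 hin, ih]
    split_ifs with h
    · exact (hleft i j h1 h).symm
    · exact (hright i j hin (not_le.1 h) h2).symm

lemma ncard_regular_vertices (hstrict : ∀ j, 1 ≤ j → j < n → lam (j + 1) < lam j) :
    {z | z ∈ (gcPolytope n lam).extremePoints ℝ ∧ (facetEqs n z).ncard ≤ n * (n - 1) / 2}.ncard =
      n.factorial := by
  have hrange : {z | z ∈ (gcPolytope n lam).extremePoints ℝ ∧
      (facetEqs n z).ncard ≤ n * (n - 1) / 2} = Set.range (gcVertex (n := n) lam) := by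
    ext z
    simp only [Set.mem_ofPred_eq, mem_extremePoints_gcPolytope_iff, Set.mem_range]
    constructor
    · rintro ⟨⟨hz, hcp⟩, hle⟩
      exact exists_gcVertex_eq hz hcp ((ncard_facetEqs_le_iff hcp).1 hle)
    · rintro ⟨k, rfl⟩
      exact ⟨⟨gcVertex_mem hstrict, gcVertex_copiesParent⟩,
        (ncard_facetEqs_le_iff gcVertex_copiesParent).2 (gcVertex_noDoubleParent hstrict)⟩
  rw [hrange, Set.ncard_range_of_injective (gcVertex_injective hstrict), Nat.card_eq_fintype_card,
    Fintype.card_pi]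
  simp [Fin.prod_univ_eq_prod_range (· + 1), Finset.prod_range_add_one_eq_factorial]

end GelfandCetlin

theorem regular_vertices_complete_flag_general (n : ℕ) (lam : ℕ → ℝ)
    (hstrict : ∀ j, 1 ≤ j → j < n → lam (j + 1) < lam j)
    (Δ : Set (ℕ → ℕ → ℝ))
    (hΔ : Δ = {x | (∀ i j, ¬(1 ≤ j ∧ j ≤ i ∧ i ≤ n) → x i j = 0) ∧
      (∀ j, 1 ≤ j → j ≤ n → x n j = lam j) ∧
      (∀ i j, 1 ≤ j → j ≤ i → i < n →
        x (i + 1) j ≥ x i j ∧ x i j ≥ x (i + 1) (j + 1))})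
    (numEq : (ℕ → ℕ → ℝ) → ℕ)
    (hnumEq : numEq = fun x => {p : ℕ × ℕ × Bool |
        1 ≤ p.2.1 ∧ p.2.1 ≤ p.1 ∧ p.1 < n ∧
        (if p.2.2 then x p.1 p.2.1 = x (p.1 + 1) p.2.1
          else x p.1 p.2.1 = x (p.1 + 1) (p.2.1 + 1))}.ncard) :
    (∀ z ∈ Set.extremePoints ℝ Δ,
      (numEq z ≤ n * (n - 1) / 2 ↔
        ∀ i j, 1 ≤ j → j ≤ i → i + 2 ≤ n →
          ¬(z i j = z (i + 1) (j + 1) ∧ z (i + 1) j = z (i + 1) (j + 1) ∧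
              z (i + 2) (j + 1) = z (i + 1) (j + 1)))) ∧
    {z | z ∈ Set.extremePoints ℝ Δ ∧ numEq z ≤ n * (n - 1) / 2}.ncard = Nat.factorial n := by
  subst hΔ hnumEq
  refine ⟨fun z hz => ?_, GelfandCetlin.ncard_regular_vertices hstrict⟩
  have hcp := GelfandCetlin.copiesParent_of_mem_extremePoints hz
  exact (GelfandCetlin.ncard_facetEqs_le_iff hcp).trans
    (GelfandCetlin.noDoubleParent_iff_no_square hstrict hz.1)

/-- Regular vertices of the Gelfand-Cetlin polytope of the complete flag variety `Fℓ_n`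
(with a strictly decreasing weight `λ_1 > λ_2 > ⋯ > λ_n`).  A vertex `z = (λ^{(i)}_j)` lies
in at most `n(n−1)/2` facets — i.e. is a regular vertex — if and only if for all
`1 ≤ j ≤ i` with `i + 2 ≤ n` not all four equalities
`λ^{(i)}_j = λ^{(i+1)}_{j+1} = λ^{(i+1)}_j = λ^{(i+2)}_{j+1}` hold.  The number of regular
vertices equals `n!`.  Facets correspond to the equalities `λ^{(i)}_j = λ^{(i+1)}_j` and
`λ^{(i)}_j = λ^{(i+1)}_{j+1}`, and `numEq z` counts those satisfied by `z`. -/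
theorem regular_vertices_complete_flag (n : ℕ) (hn : 0 < n) (lam : ℕ → ℝ)
    (hstrict : ∀ j, 1 ≤ j → j < n → lam (j + 1) < lam j)
    (Δ : Set (ℕ → ℕ → ℝ))
    (hΔ : Δ = {x | (∀ i j, ¬(1 ≤ j ∧ j ≤ i ∧ i ≤ n) → x i j = 0) ∧
      (∀ j, 1 ≤ j → j ≤ n → x n j = lam j) ∧
      (∀ i j, 1 ≤ j → j ≤ i → i < n →
        x (i + 1) j ≥ x i j ∧ x i j ≥ x (i + 1) (j + 1))})
    (numEq : (ℕ → ℕ → ℝ) → ℕ)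
    (hnumEq : numEq = fun x => {p : ℕ × ℕ × Bool |
        1 ≤ p.2.1 ∧ p.2.1 ≤ p.1 ∧ p.1 < n ∧
        (if p.2.2 then x p.1 p.2.1 = x (p.1 + 1) p.2.1
          else x p.1 p.2.1 = x (p.1 + 1) (p.2.1 + 1))}.ncard) :
    (∀ z ∈ Set.extremePoints ℝ Δ,
      (numEq z ≤ n * (n - 1) / 2 ↔
        ∀ i j, 1 ≤ j → j ≤ i → i + 2 ≤ n →
          ¬(z i j = z (i + 1) (j + 1) ∧ z (i + 1) j = z (i + 1) (j + 1) ∧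
              z (i + 2) (j + 1) = z (i + 1) (j + 1)))) ∧
    {z | z ∈ Set.extremePoints ℝ Δ ∧ numEq z ≤ n * (n - 1) / 2}.ncard = Nat.factorial n :=
  regular_vertices_complete_flag_general n lam hstrict Δ hΔ numEq hnumEq
end
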